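/- arXiv:math/0304252 — 10 statements merged into one kernel-verified Lean document; each statement's English description precedes it below -/
import Mathlib

section
/- Let E be a finite set, d ≥ 1, and let φ be a generic symmetric function on the injective (d+1)-tuples of E. Then for any three distinct elements a, b, c ∈ E one has n_φ(a,b) + n_φ(b,c) + n_φ(a,c) ≡ 0 (mod 2). -/
open Finset

/-- A function on `d`-tuples is symmetric if it is invariant under all
permutations of the index set. -/
def IsSymmetricFn {E : Type*} {d : ℕ} (φ : (Fin d → E) → ℝ) : Prop :=
  ∀ (x : Fin d → E) (σ : Equiv.Perm (Fin d)), φ (x ∘ σ) = φ x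

/-- A function on `d`-tuples is antisymmetric if permuting the entries by `σ`
multiplies the value by `sign σ`. -/
def IsAntisymmetricFn {E : Type*} {d : ℕ} (φ : (Fin d → E) → ℝ) : Prop :=
  ∀ (x : Fin d → E) (σ : Equiv.Perm (Fin d)),
    φ (x ∘ σ) = ((Equiv.Perm.sign σ : ℤ) : ℝ) * φ x

/-- A function on `d`-tuples is generic if it does not vanish on any injective tuple. -/
def IsGenericFn {E : Type*} {d : ℕ} (φ : (Fin d → E) → ℝ) : Prop :=
  ∀ x : Fin d → E, Function.Injective x → φ x ≠ 0

/-- A `d`-element subset `s` (not containing `a`, `b`) separates `a` from `b`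
with respect to `φ` if `φ(x₁,…,x_d,a) * φ(x₁,…,x_d,b) < 0` for some (equivalently,
for symmetric or antisymmetric `φ`, any) enumeration `x` of `s`. -/
def Separates {E : Type*} [DecidableEq E] {d : ℕ} (φ : (Fin (d + 1) → E) → ℝ)
    (s : Finset E) (a b : E) : Prop :=
  ∃ x : Fin d → E, Function.Injective x ∧ Finset.image x Finset.univ = s ∧
    φ (Fin.snoc x a) * φ (Fin.snoc x b) < 0

/-- `sepCount φ a b` is the number `n_φ(a,b)` of `d`-subsets of `E \ {a,b}`
separating `a` from `b`. -/
noncomputable def sepCount {E : Type*} [DecidableEq E] {d : ℕ}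
    (φ : (Fin (d + 1) → E) → ℝ) (a b : E) : ℕ :=
  Set.ncard {s : Finset E | s.card = d ∧ a ∉ s ∧ b ∉ s ∧ Separates φ s a b}

/-- The Orchard relation of a generic symmetric function. -/
def OrchardSym {E : Type*} [DecidableEq E] {d : ℕ}
    (φ : (Fin (d + 1) → E) → ℝ) (x y : E) : Prop :=
  x = y ∨ sepCount φ x y % 2 = 0

/-- The Orchard relation of a generic antisymmetric function. -/
def OrchardAnti {E : Type*} [Fintype E] [DecidableEq E] {d : ℕ}
    (φ : (Fin (d + 1) → E) → ℝ) (x y : E) : Prop :=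
  x = y ∨ sepCount φ x y % 2 = Nat.choose (Fintype.card E - 3) (d - 1) % 2

/-- Two generic functions are flip-related with flip set `F` if their product is
negative on tuples enumerating `F` and positive on all other injective tuples. -/
def FlipRelated {E : Type*} [DecidableEq E] {d : ℕ}
    (φ ψ : (Fin (d + 1) → E) → ℝ) (F : Finset E) : Prop :=
  ∀ x : Fin (d + 1) → E, Function.Injective x →
    (Finset.image x Finset.univ = F → φ x * ψ x < 0) ∧
    (Finset.image x Finset.univ ≠ F → 0 < φ x * ψ x)

/-- `Rmap φ (x₁,…,x_d) = ∏_{x ∈ E∖{x₁,…,x_d}} φ(x,x₁,…,x_d)`. -/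
noncomputable def Rmap {E : Type*} [Fintype E] [DecidableEq E] {d : ℕ}
    (φ : (Fin (d + 1) → E) → ℝ) : (Fin d → E) → ℝ :=
  fun x => ∏ y ∈ Finset.univ \ Finset.image x Finset.univ, φ (Fin.cons y x)

/-- `Amap φ (x₀,…,x_{d+1}) = ∏_{i=0}^{d+1} φ(x₀,…,x_{i-1},x_{i+1},…,x_{d+1})`. -/
noncomputable def Amap {E : Type*} {d : ℕ}
    (φ : (Fin (d + 1) → E) → ℝ) : (Fin (d + 2) → E) → ℝ :=
  fun x => ∏ i : Fin (d + 2), φ (x ∘ Fin.succAbove i)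

/-- `muCount φ x` is the number of `d`-subsets `{x₁,…,x_d} ⊆ E∖{x}` with
`φ(x,x₁,…,x_d) > 0`. -/
noncomputable def muCount {E : Type*} [DecidableEq E] {d : ℕ}
    (φ : (Fin (d + 1) → E) → ℝ) (x : E) : ℕ :=
  Set.ncard {s : Finset E | s.card = d ∧ x ∉ s ∧
    ∃ t : Fin d → E, Function.Injective t ∧ Finset.image t Finset.univ = s ∧
      0 < φ (Fin.cons x t)}

/-! Call a `(d+1)`-set negative if `φ` is negative on it (well defined by symmetry). By
genericity, a `d`-set `s` separates `a` from `b` exactly when one of `s ∪ {a}`, `s ∪ {b}` is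
negative and the other is not. Hence, modulo 2, `n_φ(a,b)` is the number of negative `(d+1)`-sets
containing exactly one of `a`, `b`, which is `F a + F b` for `F x` the number of negative
`(d+1)`-sets containing `x`. So `n_φ` is a coboundary mod 2 and its sum over the triangle
`a, b, c` is `2 (F a + F b + F c) ≡ 0`. -/

open Function

section Parity

variable {α : Type*} (P : Finset α) (p q : α → Prop) [DecidablePred p] [DecidablePred q]

theorem card_filter_xor_cast :
    (#{x ∈ P | Xor (p x) (q x)} : ZMod 2) = #{x ∈ P | p x} + #{x ∈ P | q x} := by
  simp only [card_filter, Nat.cast_sum, Nat.cast_ite, Nat.cast_one, Nat.cast_zero,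
    ← sum_add_distrib]
  refine sum_congr rfl fun x _ => ?_
  by_cases hp : p x <;> by_cases hq : q x <;> simp [hp, hq, xor_def, CharTwo.add_self_eq_zero]

theorem card_filter_and_not_add_card_filter_and_not [DecidableEq α] :
    #{x ∈ P | p x ∧ ¬q x} + #{x ∈ P | q x ∧ ¬p x} = #{x ∈ P | Xor (p x) (q x)} := by
  rw [← card_union_of_disjoint (disjoint_filter.2 fun x _ h h' => h'.2 h.1), ← filter_or]
  rfl

end Parity

section InsertCount

variable {α : Type*} [DecidableEq α] [Fintype α]

theorem card_filter_insert_eq (Q : Finset α → Prop) [DecidablePred Q] (a : α) (d : ℕ) :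
    #{s | s.card = d ∧ a ∉ s ∧ Q (insert a s)} = #{t | t.card = d + 1 ∧ a ∈ t ∧ Q t} := by
  apply card_nbij' (insert a) (fun t => t.erase a)
  · intro s hs
    simp only [coe_filter, mem_univ, true_and, Set.mem_ofPred_eq] at hs ⊢
    exact ⟨by rw [card_insert_of_notMem hs.2.1, hs.1], mem_insert_self a s, hs.2.2⟩
  · intro t ht
    simp only [coe_filter, mem_univ, true_and, Set.mem_ofPred_eq] at ht ⊢
    exact ⟨by rw [card_erase_of_mem ht.2.1, ht.1]; rfl, notMem_erase a t,
      by rw [insert_erase ht.2.1]; exact ht.2.2⟩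
  · intro s hs
    simp only [coe_filter, mem_univ, true_and, Set.mem_ofPred_eq] at hs
    exact erase_insert hs.2.1
  · intro t ht
    simp only [coe_filter, mem_univ, true_and, Set.mem_ofPred_eq] at ht
    exact insert_erase ht.2.1

theorem card_xor_insert_cast (N : Finset α → Prop) [DecidablePred N] {a b : α} (hab : a ≠ b)
    (d : ℕ) :
    (#{s | s.card = d ∧ a ∉ s ∧ b ∉ s ∧ Xor (N (insert a s)) (N (insert b s))} : ZMod 2) =
      #{t | t.card = d + 1 ∧ a ∈ t ∧ N t} + #{t | t.card = d + 1 ∧ b ∈ t ∧ N t} := by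
  set S : Finset (Finset α) := {s | s.card = d ∧ a ∉ s ∧ b ∉ s}
  set T : Finset (Finset α) := {t | t.card = d + 1 ∧ N t}
  have hinsert : ∀ u v : α, u ≠ v → (∀ s, s ∈ S ↔ s.card = d ∧ u ∉ s ∧ v ∉ s) →
      #{s ∈ S | N (insert u s)} = #{t ∈ T | u ∈ t ∧ v ∉ t} := by
    intro u v huv hS
    convert card_filter_insert_eq (fun t => v ∉ t ∧ N t) u d using 2
    · ext s
      simp only [mem_filter, hS, mem_univ, true_and, mem_insert, not_or]
      have := huv.symm
      tauto
    · ext t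
      simp only [T, mem_filter, mem_univ, true_and]
      tauto
  calc (#{s | s.card = d ∧ a ∉ s ∧ b ∉ s ∧ Xor (N (insert a s)) (N (insert b s))} : ZMod 2)
      = #{s ∈ S | N (insert a s)} + #{s ∈ S | N (insert b s)} := by
        rw [← card_filter_xor_cast, filter_filter]
        simp only [and_assoc]
    _ = #{t ∈ T | a ∈ t ∧ b ∉ t} + #{t ∈ T | b ∈ t ∧ a ∉ t} := by
        rw [hinsert a b hab (fun s => by simp [S]),
          hinsert b a hab.symm (fun s => by simp [S]; tauto)]
    _ = #{t ∈ T | a ∈ t} + #{t ∈ T | b ∈ t} := by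
        rw [← Nat.cast_add, card_filter_and_not_add_card_filter_and_not, card_filter_xor_cast]
    _ = #{t | t.card = d + 1 ∧ a ∈ t ∧ N t} + #{t | t.card = d + 1 ∧ b ∈ t ∧ N t} := by
        simp only [T, filter_filter, and_assoc, @and_comm (N _)]

end InsertCount

section SymmetricFn

variable {E : Type*} [DecidableEq E] {n : ℕ}

theorem Finset.exists_injective_image_univ_eq {s : Finset E} (h : s.card = n) :
    ∃ x : Fin n → E, Injective x ∧ image x univ = s := by
  refine ⟨fun i => ((s.equivFinOfCardEq h).symm i : E),
    Subtype.val_injective.comp (s.equivFinOfCardEq h).symm.injective, ?_⟩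
  ext e
  simp only [mem_image, mem_univ, true_and]
  exact ⟨fun ⟨i, hi⟩ => hi ▸ ((s.equivFinOfCardEq h).symm i).2,
    fun he => ⟨s.equivFinOfCardEq h ⟨e, he⟩, by simp⟩⟩

theorem IsSymmetricFn.apply_eq_of_image_eq {φ : (Fin n → E) → ℝ} (hsym : IsSymmetricFn φ)
    {x y : Fin n → E} (hx : Injective x) (hy : Injective y)
    (h : image x univ = image y univ) : φ x = φ y := by
  have hrange : Set.range x = Set.range y := by
    rw [← Fintype.coe_image_univ, h, Fintype.coe_image_univ]
  let σ : Equiv.Perm (Fin n) :=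
    (Equiv.ofInjective x hx).trans ((Equiv.setCongr hrange).trans (Equiv.ofInjective y hy).symm)
  have hxy : x = y ∘ σ := by
    funext i
    simp [σ, Equiv.apply_ofInjective_symm]
  rw [hxy, hsym]

def NegOn (φ : (Fin n → E) → ℝ) (T : Finset E) : Prop :=
  ∃ x : Fin n → E, Injective x ∧ image x univ = T ∧ φ x < 0

theorem IsSymmetricFn.negOn_image_iff {φ : (Fin n → E) → ℝ} (hsym : IsSymmetricFn φ)
    {x : Fin n → E} (hx : Injective x) : NegOn φ (image x univ) ↔ φ x < 0 :=
  ⟨fun ⟨_, hy, hyx, hneg⟩ => hsym.apply_eq_of_image_eq hy hx hyx ▸ hneg,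
    fun hneg => ⟨x, hx, rfl, hneg⟩⟩

theorem mul_neg_iff_xor {R : Type*} [Ring R] [LinearOrder R] [IsStrictOrderedRing R] {u v : R}
    (hu : u ≠ 0) (hv : v ≠ 0) : u * v < 0 ↔ Xor (u < 0) (v < 0) := by
  rw [mul_neg_iff, xor_def, ← not_le (a := u), ← not_le (a := v), hu.le_iff_lt, hv.le_iff_lt]
  tauto

theorem separates_iff_xor {φ : (Fin (n + 1) → E) → ℝ} (hgen : IsGenericFn φ)
    (hsym : IsSymmetricFn φ) {s : Finset E} (hs : s.card = n) {a b : E} (ha : a ∉ s)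
    (hb : b ∉ s) :
    Separates φ s a b ↔ Xor (NegOn φ (insert a s)) (NegOn φ (insert b s)) := by
  have key : ∀ x : Fin n → E, Injective x → image x univ = s →
      (φ (Fin.snoc x a) * φ (Fin.snoc x b) < 0 ↔
        Xor (NegOn φ (insert a s)) (NegOn φ (insert b s))) := by
    rintro x hx rfl
    have hsnoc : ∀ e ∉ image x univ, Injective (Fin.snoc x e : Fin (n + 1) → E) ∧
        image (Fin.snoc x e : Fin (n + 1) → E) univ = insert e (image x univ) := by
      intro e he
      rw [← mem_coe, Fintype.coe_image_univ] at he
      refine ⟨Fin.snoc_injective_of_injective hx he, coe_injective ?_⟩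
      simp only [Fintype.coe_image_univ, coe_insert, Fin.range_snoc]
    obtain ⟨hxa, hima⟩ := hsnoc a ha
    obtain ⟨hxb, himb⟩ := hsnoc b hb
    rw [← hima, ← himb, hsym.negOn_image_iff hxa, hsym.negOn_image_iff hxb]
    exact mul_neg_iff_xor (hgen _ hxa) (hgen _ hxb)
  constructor
  · rintro ⟨x, hx, hxs, hneg⟩
    exact (key x hx hxs).1 hneg
  · intro h
    obtain ⟨x, hx, hxs⟩ := exists_injective_image_univ_eq hs
    exact ⟨x, hx, hxs, (key x hx hxs).2 h⟩

open scoped Classical in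
theorem sepCount_cast_eq [Fintype E] {φ : (Fin (n + 1) → E) → ℝ} (hgen : IsGenericFn φ)
    (hsym : IsSymmetricFn φ) {a b : E} (hab : a ≠ b) :
    (sepCount φ a b : ZMod 2) =
      #{T | T.card = n + 1 ∧ a ∈ T ∧ NegOn φ T} + #{T | T.card = n + 1 ∧ b ∈ T ∧ NegOn φ T} := by
  rw [← card_xor_insert_cast _ hab, sepCount, Set.ncard_eq_toFinset_card']
  congr 2
  ext s
  simp only [Set.mem_toFinset, Set.mem_ofPred_eq, mem_filter, mem_univ, true_and]
  exact and_congr_right fun hs => and_congr_right fun ha => and_congr_right fun hb =>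
    separates_iff_xor hgen hsym hs ha hb

end SymmetricFn

theorem stmt_0_general {E : Type*} [Fintype E] [DecidableEq E] (d : ℕ)
    (φ : (Fin (d + 1) → E) → ℝ)
    (hgen : IsGenericFn φ) (hsym : IsSymmetricFn φ)
    (a b c : E) (hab : a ≠ b) (hbc : b ≠ c) (hac : a ≠ c) :
    (sepCount φ a b + sepCount φ b c + sepCount φ a c) % 2 = 0 := by
  rw [← Nat.dvd_iff_mod_eq_zero, ← ZMod.natCast_eq_zero_iff, Nat.cast_add, Nat.cast_add,
    sepCount_cast_eq hgen hsym hab, sepCount_cast_eq hgen hsym hbc,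
    sepCount_cast_eq hgen hsym hac]
  ring_nf
  reduce_mod_char

theorem stmt_0 {E : Type*} [Fintype E] [DecidableEq E] (d : ℕ) (hd : 1 ≤ d)
    (hcard : d + 1 ≤ Fintype.card E)
    (φ : (Fin (d + 1) → E) → ℝ)
    (hgen : IsGenericFn φ) (hsym : IsSymmetricFn φ)
    (a b c : E) (hab : a ≠ b) (hbc : b ≠ c) (hac : a ≠ c) :
    (sepCount φ a b + sepCount φ b c + sepCount φ a c) % 2 = 0 :=
  stmt_0_general d φ hgen hsym a b c hab hbc hac
end

section
/- Let E be a finite set, d ≥ 1, and let φ be a generic symmetric function on the injective (d+1)-tuples of E. Then the Orchard relation ∼_φ (defined by x ∼_φ y iff x = y or n_φ(x,y) ≡ 0 (mod 2)) is an equivalence relation on E. -/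
open Finset

namespace OrchardAux
variable {E : Type*} [DecidableEq E] {n : ℕ}

lemma phi_eq_of_image_eq {φ : (Fin n → E) → ℝ} (hsym : ∀ (x : Fin n → E) (σ : Equiv.Perm (Fin n)), φ (x ∘ σ) = φ x)
    {x x' : Fin n → E} (hx : Function.Injective x) (hx' : Function.Injective x')
    (h : Finset.image x Finset.univ = Finset.image x' Finset.univ) : φ x = φ x' := by
  have hr : Set.range x = Set.range x' := by
    ext y
    constructor
    · rintro ⟨i, rfl⟩
      have : x i ∈ Finset.image x' Finset.univ := h ▸ (Finset.mem_image.2 ⟨i, mem_univ i, rfl⟩)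
      obtain ⟨j, -, hj⟩ := Finset.mem_image.1 this
      exact ⟨j, hj⟩
    · rintro ⟨i, rfl⟩
      have : x' i ∈ Finset.image x Finset.univ := h ▸ (Finset.mem_image.2 ⟨i, mem_univ i, rfl⟩)
      obtain ⟨j, -, hj⟩ := Finset.mem_image.1 this
      exact ⟨j, hj⟩
  set σ : Fin n ≃ Fin n :=
    (Equiv.ofInjective x' hx').trans ((Equiv.setCongr hr.symm).trans (Equiv.ofInjective x hx).symm)
  have hxσ : x ∘ σ = x' := by
    funext i
    show x ((Equiv.ofInjective x hx).symm ⟨x' i, _⟩) = x' i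
    exact Equiv.apply_ofInjective_symm hx _
  rw [← hxσ, hsym]

open scoped Classical in
noncomputable def setVal (φ : (Fin n → E) → ℝ) (S : Finset E) : ℝ :=
  if h : ∃ x : Fin n → E, Function.Injective x ∧ Finset.image x Finset.univ = S then φ h.choose
  else 1

lemma setVal_eq {φ : (Fin n → E) → ℝ} (hsym : ∀ (x : Fin n → E) (σ : Equiv.Perm (Fin n)), φ (x ∘ σ) = φ x)
    {x : Fin n → E} (hx : Function.Injective x) {S : Finset E}
    (hS : Finset.image x Finset.univ = S) : setVal φ S = φ x := by
  have h : ∃ y : Fin n → E, Function.Injective y ∧ Finset.image y Finset.univ = S := ⟨x, hx, hS⟩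
  rw [setVal, dif_pos h]
  obtain ⟨h1, h2⟩ := h.choose_spec
  exact phi_eq_of_image_eq hsym h1 hx (h2.trans hS.symm)

lemma exists_enum {S : Finset E} (h : S.card = n) :
    ∃ x : Fin n → E, Function.Injective x ∧ Finset.image x Finset.univ = S := by
  refine ⟨fun i => (S.equivFin.symm (Fin.cast h.symm i) : E), ?_, ?_⟩
  · intro i j hij
    have := S.equivFin.symm.injective (Subtype.ext hij)
    simpa [Fin.ext_iff] using this
  · ext y
    simp only [Finset.mem_image, mem_univ, true_and]
    constructor
    · rintro ⟨i, rfl⟩; exact (S.equivFin.symm _).2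
    · intro hy
      exact ⟨Fin.cast h (S.equivFin ⟨y, hy⟩), by simp⟩

lemma image_snoc (x : Fin n → E) (a : E) :
    Finset.image (Fin.snoc x a : Fin (n + 1) → E) Finset.univ = insert a (Finset.image x Finset.univ) := by
  ext y
  simp only [Finset.mem_image, mem_univ, true_and, Finset.mem_insert]
  constructor
  · rintro ⟨i, rfl⟩
    induction i using Fin.lastCases with
    | last => left; simp
    | cast j => right; exact ⟨j, by simp⟩
  · rintro (rfl | ⟨j, rfl⟩)
    · exact ⟨Fin.last n, by simp⟩
    · exact ⟨j.castSucc, by simp⟩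

lemma snoc_injective {x : Fin n → E} (hx : Function.Injective x) {a : E}
    (ha : a ∉ Finset.image x Finset.univ) : Function.Injective (Fin.snoc x a : Fin (n + 1) → E) := by
  intro i j hij
  have hax : ∀ k : Fin n, x k ≠ a := by
    intro k hk
    exact ha (Finset.mem_image.2 ⟨k, mem_univ k, hk⟩)
  induction i using Fin.lastCases with
  | last =>
    induction j using Fin.lastCases with
    | last => rfl
    | cast j => simp only [Fin.snoc_last, Fin.snoc_castSucc] at hij; exact absurd hij.symm (hax j)
  | cast i =>
    induction j using Fin.lastCases with
    | last => simp only [Fin.snoc_last, Fin.snoc_castSucc] at hij; exact absurd hij (hax i)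
    | cast j => simp only [Fin.snoc_castSucc] at hij; exact congrArg Fin.castSucc (hx hij)

end OrchardAux

namespace OrchardAux
variable {E : Type*} [DecidableEq E] {d : ℕ}

lemma separates_iff {φ : (Fin (d + 1) → E) → ℝ} (hsym : IsSymmetricFn φ)
    {s : Finset E} (hs : s.card = d) {a b : E} (ha : a ∉ s) (hb : b ∉ s) :
    Separates φ s a b ↔ setVal φ (insert a s) * setVal φ (insert b s) < 0 := by
  constructor
  · rintro ⟨x, hx, him, hlt⟩
    rw [setVal_eq hsym (snoc_injective hx (him ▸ ha)) (by rw [image_snoc, him]),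
        setVal_eq hsym (snoc_injective hx (him ▸ hb)) (by rw [image_snoc, him])]
    exact hlt
  · intro h
    obtain ⟨x, hx, him⟩ := exists_enum hs
    refine ⟨x, hx, him, ?_⟩
    rwa [setVal_eq hsym (snoc_injective hx (him ▸ ha)) (by rw [image_snoc, him]),
        setVal_eq hsym (snoc_injective hx (him ▸ hb)) (by rw [image_snoc, him])] at h

lemma setVal_ne_zero {φ : (Fin (d + 1) → E) → ℝ} (hsym : IsSymmetricFn φ)
    (hgen : IsGenericFn φ) {S : Finset E} (hS : S.card = d + 1) : setVal φ S ≠ 0 := by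
  obtain ⟨x, hx, him⟩ := exists_enum hS
  rw [setVal_eq hsym hx him]
  exact hgen x hx

lemma separates_comm {φ : (Fin (d + 1) → E) → ℝ} {s : Finset E} {a b : E} :
    Separates φ s a b ↔ Separates φ s b a := by
  unfold Separates
  refine exists_congr fun x => and_congr_right fun _ => and_congr_right fun _ => ?_
  rw [mul_comm]

lemma sepCount_comm (φ : (Fin (d + 1) → E) → ℝ) (a b : E) :
    sepCount φ a b = sepCount φ b a := by
  unfold sepCount
  congr 1
  ext s
  simp only [Set.mem_setOf_eq]
  constructor
  · rintro ⟨h1, h2, h3, h4⟩; exact ⟨h1, h3, h2, separates_comm.1 h4⟩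
  · rintro ⟨h1, h2, h3, h4⟩; exact ⟨h1, h3, h2, separates_comm.1 h4⟩

lemma par3 {X Y Z : ℝ} (hX : X ≠ 0) (hY : Y ≠ 0) (hZ : Z ≠ 0) :
    ((if X * Y < 0 then 1 else 0) + (if Y * Z < 0 then 1 else 0) +
      (if X * Z < 0 then 1 else 0)) % 2 = 0 := by
  rcases hX.lt_or_gt with hx | hx <;> rcases hY.lt_or_gt with hy | hy <;>
    rcases hZ.lt_or_gt with hz | hz <;>
    simp [mul_neg_iff, hx, hy, hz, lt_asymm hx, lt_asymm hy, lt_asymm hz]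

end OrchardAux

namespace OrchardAux

lemma parity3 {E : Type*} [Fintype E] [DecidableEq E] {d : ℕ} (hd : 1 ≤ d)
    (φ : (Fin (d + 1) → E) → ℝ) (hgen : IsGenericFn φ) (hsym : IsSymmetricFn φ)
    {a b c : E} (hab : a ≠ b) (hac : a ≠ c) (hbc : b ≠ c) :
    (sepCount φ a b + sepCount φ b c + sepCount φ a c) % 2 = 0 := by
  classical
  -- express sepCount as filter card
  have hsc : ∀ u v : E, sepCount φ u v =
      (Finset.univ.filter (fun s : Finset E =>
        s.card = d ∧ u ∉ s ∧ v ∉ s ∧ Separates φ s u v)).card := by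
    intro u v
    unfold sepCount
    rw [show {s : Finset E | s.card = d ∧ u ∉ s ∧ v ∉ s ∧ Separates φ s u v} =
        (↑(Finset.univ.filter (fun s : Finset E =>
          s.card = d ∧ u ∉ s ∧ v ∉ s ∧ Separates φ s u v)) : Set (Finset E)) from by
        ext s; simp]
    exact Set.ncard_coe_finset _
  -- ground sets
  set T : Finset (Finset E) := Finset.univ.filter
    (fun s : Finset E => s.card = d ∧ a ∉ s ∧ b ∉ s ∧ c ∉ s) with hT
  set T' : Finset (Finset E) := Finset.univ.filter
    (fun t : Finset E => t.card = d - 1 ∧ a ∉ t ∧ b ∉ t ∧ c ∉ t) with hT'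
  -- split each count by membership of the third point
  have hsplit : ∀ u v w : E,
      (Finset.univ.filter (fun s : Finset E =>
        s.card = d ∧ u ∉ s ∧ v ∉ s ∧ Separates φ s u v)).card
      = ((Finset.univ.filter (fun s : Finset E =>
          s.card = d ∧ u ∉ s ∧ v ∉ s ∧ Separates φ s u v)).filter (fun s => w ∉ s)).card
      + ((Finset.univ.filter (fun s : Finset E =>
          s.card = d ∧ u ∉ s ∧ v ∉ s ∧ Separates φ s u v)).filter (fun s => w ∈ s)).card := by
    intro u v w
    rw [← Finset.card_filter_add_card_filter_not (p := fun s => w ∉ s)]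
    congr 2
    ext s
    simp
  -- A parts
  have hAab : ((Finset.univ.filter (fun s : Finset E =>
      s.card = d ∧ a ∉ s ∧ b ∉ s ∧ Separates φ s a b)).filter (fun s => c ∉ s))
      = T.filter (fun s => Separates φ s a b) := by
    ext s; simp only [hT, Finset.mem_filter, Finset.mem_univ, true_and]; tauto
  have hAbc : ((Finset.univ.filter (fun s : Finset E =>
      s.card = d ∧ b ∉ s ∧ c ∉ s ∧ Separates φ s b c)).filter (fun s => a ∉ s))
      = T.filter (fun s => Separates φ s b c) := by
    ext s; simp only [hT, Finset.mem_filter, Finset.mem_univ, true_and]; tauto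
  have hAac : ((Finset.univ.filter (fun s : Finset E =>
      s.card = d ∧ a ∉ s ∧ c ∉ s ∧ Separates φ s a c)).filter (fun s => b ∉ s))
      = T.filter (fun s => Separates φ s a c) := by
    ext s; simp only [hT, Finset.mem_filter, Finset.mem_univ, true_and]; tauto
  -- A parity
  have hAsum : ((T.filter (fun s => Separates φ s a b)).card
      + (T.filter (fun s => Separates φ s b c)).card
      + (T.filter (fun s => Separates φ s a c)).card) % 2 = 0 := by
    rw [Finset.card_filter, Finset.card_filter, Finset.card_filter,
      ← Finset.sum_add_distrib, ← Finset.sum_add_distrib, Finset.sum_nat_mod]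
    have hz : ∀ s ∈ T, ((if Separates φ s a b then 1 else 0)
        + (if Separates φ s b c then 1 else 0)
        + (if Separates φ s a c then 1 else 0)) % 2 = 0 := by
      intro s hs
      rw [hT, Finset.mem_filter] at hs
      obtain ⟨-, hsd, ha, hb, hc⟩ := hs
      rw [if_congr (separates_iff hsym hsd ha hb) rfl rfl,
          if_congr (separates_iff hsym hsd hb hc) rfl rfl,
          if_congr (separates_iff hsym hsd ha hc) rfl rfl]
      exact par3 (setVal_ne_zero hsym hgen (by rw [Finset.card_insert_of_notMem ha, hsd]))
        (setVal_ne_zero hsym hgen (by rw [Finset.card_insert_of_notMem hb, hsd]))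
        (setVal_ne_zero hsym hgen (by rw [Finset.card_insert_of_notMem hc, hsd]))
    rw [Finset.sum_congr rfl hz]
    simp
  -- B parts via bijection s ↦ s.erase w
  have hB : ∀ u v w : E, u ∉ ({v, w} : Finset E) → v ∉ ({u, w} : Finset E) →
      ((Finset.univ.filter (fun s : Finset E =>
        s.card = d ∧ u ∉ s ∧ v ∉ s ∧ Separates φ s u v)).filter (fun s => w ∈ s)).card
      = ((Finset.univ.filter (fun t : Finset E => t.card = d - 1 ∧ u ∉ t ∧ v ∉ t ∧ w ∉ t)).filter
          (fun t => setVal φ (insert u (insert w t)) * setVal φ (insert v (insert w t)) < 0)).card := by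
    intro u v w hu hv
    simp only [Finset.mem_insert, Finset.mem_singleton, not_or] at hu hv
    refine Finset.card_bij' (fun s _ => s.erase w) (fun t _ => insert w t) ?_ ?_ ?_ ?_
    · intro s hs
      simp only [Finset.mem_filter, Finset.mem_univ, true_and] at hs ⊢
      obtain ⟨⟨hsd, hus, hvs, hsep⟩, hws⟩ := hs
      have h1 : insert w (s.erase w) = s := Finset.insert_erase hws
      refine ⟨⟨by rw [Finset.card_erase_of_mem hws, hsd],
        fun h => hus (Finset.mem_of_mem_erase h),
        fun h => hvs (Finset.mem_of_mem_erase h),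
        Finset.notMem_erase w s⟩, ?_⟩
      rw [h1]
      exact (separates_iff hsym hsd hus hvs).1 hsep
    · intro t ht
      simp only [Finset.mem_filter, Finset.mem_univ, true_and] at ht ⊢
      obtain ⟨⟨htd, hut, hvt, hwt⟩, hlt⟩ := ht
      have hcard : (insert w t).card = d := by
        rw [Finset.card_insert_of_notMem hwt, htd]; omega
      have hui : u ∉ insert w t := by
        simp only [Finset.mem_insert, not_or]; exact ⟨hu.2, hut⟩
      have hvi : v ∉ insert w t := by
        simp only [Finset.mem_insert, not_or]; exact ⟨hv.2, hvt⟩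
      exact ⟨⟨hcard, hui, hvi, (separates_iff hsym hcard hui hvi).2 hlt⟩,
        Finset.mem_insert_self w t⟩
    · intro s hs
      simp only [Finset.mem_filter] at hs
      exact Finset.insert_erase hs.2
    · intro t ht
      simp only [Finset.mem_filter, Finset.mem_univ, true_and] at ht
      exact Finset.erase_insert ht.1.2.2.2
  -- B parity
  have hBsum : ((T'.filter (fun t => setVal φ (insert a (insert c t)) * setVal φ (insert b (insert c t)) < 0)).card
      + (T'.filter (fun t => setVal φ (insert b (insert a t)) * setVal φ (insert c (insert a t)) < 0)).card
      + (T'.filter (fun t => setVal φ (insert a (insert b t)) * setVal φ (insert c (insert b t)) < 0)).card) % 2 = 0 := by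
    rw [Finset.card_filter, Finset.card_filter, Finset.card_filter,
      ← Finset.sum_add_distrib, ← Finset.sum_add_distrib, Finset.sum_nat_mod]
    have hz : ∀ t ∈ T', ((if setVal φ (insert a (insert c t)) * setVal φ (insert b (insert c t)) < 0 then 1 else 0)
        + (if setVal φ (insert b (insert a t)) * setVal φ (insert c (insert a t)) < 0 then 1 else 0)
        + (if setVal φ (insert a (insert b t)) * setVal φ (insert c (insert b t)) < 0 then 1 else 0)) % 2 = 0 := by
      intro t ht
      rw [hT', Finset.mem_filter] at ht
      obtain ⟨-, htd, ha, hb, hc⟩ := ht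
      rw [Finset.insert_comm b a t, Finset.insert_comm c a t, Finset.insert_comm c b t]
      have hcW : (insert a (insert b t)).card = d + 1 := by
        rw [Finset.card_insert_of_notMem (by simp [hab, ha]),
          Finset.card_insert_of_notMem hb, htd]; omega
      have hcV : (insert a (insert c t)).card = d + 1 := by
        rw [Finset.card_insert_of_notMem (by simp [hac, ha]),
          Finset.card_insert_of_notMem hc, htd]; omega
      have hcU : (insert b (insert c t)).card = d + 1 := by
        rw [Finset.card_insert_of_notMem (by simp [hbc, hb]),
          Finset.card_insert_of_notMem hc, htd]; omega
      have h := par3 (setVal_ne_zero hsym hgen hcW) (setVal_ne_zero hsym hgen hcV)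
        (setVal_ne_zero hsym hgen hcU)
      omega
    rw [Finset.sum_congr rfl hz]
    simp
  -- assemble
  have e1 := hsplit a b c
  have e2 := hsplit b c a
  have e3 := hsplit a c b
  rw [hAab] at e1
  rw [hAbc] at e2
  rw [hAac] at e3
  rw [hB a b c (by simp [hab, hac]) (by simp [Ne.symm hab, hbc])] at e1
  rw [hB b c a (by simp [hbc, Ne.symm hab]) (by simp [Ne.symm hbc, Ne.symm hac])] at e2
  rw [hB a c b (by simp [hac, hab]) (by simp [Ne.symm hac, Ne.symm hbc])] at e3
  have hTbc : (Finset.univ.filter (fun t : Finset E => t.card = d - 1 ∧ b ∉ t ∧ c ∉ t ∧ a ∉ t)) = T' := by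
    ext t; simp only [hT', Finset.mem_filter, Finset.mem_univ, true_and]; tauto
  have hTac : (Finset.univ.filter (fun t : Finset E => t.card = d - 1 ∧ a ∉ t ∧ c ∉ t ∧ b ∉ t)) = T' := by
    ext t; simp only [hT', Finset.mem_filter, Finset.mem_univ, true_and]; tauto
  rw [← hT'] at e1
  rw [hTbc] at e2
  rw [hTac] at e3
  rw [hsc a b, hsc b c, hsc a c, e1, e2, e3]
  omega

end OrchardAux

theorem stmt_2 {E : Type*} [Fintype E] [DecidableEq E] (d : ℕ) (hd : 1 ≤ d)
    (hcard : d + 1 ≤ Fintype.card E)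
    (φ : (Fin (d + 1) → E) → ℝ)
    (hgen : IsGenericFn φ) (hsym : IsSymmetricFn φ) :
    Equivalence (OrchardSym φ) := by
  constructor
  · intro x
    exact Or.inl rfl
  · intro x y hxy
    rcases hxy with rfl | h
    · exact Or.inl rfl
    · exact Or.inr (by rw [OrchardAux.sepCount_comm]; exact h)
  · intro x y z hxy hyz
    rcases hxy with rfl | h1
    · exact hyz
    rcases hyz with rfl | h2
    · exact Or.inr h1
    by_cases hxy' : x = y
    · subst hxy'; exact Or.inr h2
    by_cases hyz' : y = z
    · subst hyz'; exact Or.inr h1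
    by_cases hxz : x = z
    · exact Or.inl hxz
    have hp := OrchardAux.parity3 hd φ hgen hsym hxy' hxz hyz'
    exact Or.inr (by omega)
end

section
/- Let E be a finite set, d ≥ 1, and let φ be a generic symmetric function on the injective (d+1)-tuples of E. Then the Orchard relation ∼_φ has at most two equivalence classes: for any a, b, c ∈ E, if a ≁_φ b and b ≁_φ c then a ∼_φ c. -/
open Finset

section OrchardAux

open Finset Function
open scoped Classical

variable {E : Type*} [DecidableEq E]

private lemma symEq {n : ℕ} {F : (Fin n → E) → ℝ} (hF : IsSymmetricFn F)
    {u v : Fin n → E} (hv : Function.Injective v)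
    (h : Finset.image u Finset.univ = Finset.image v Finset.univ) : F u = F v := by
  have hx : ∀ i, ∃ j, u j = v i := by
    intro i
    have hvi : v i ∈ Finset.image u Finset.univ := by
      rw [h]; exact Finset.mem_image_of_mem v (Finset.mem_univ i)
    simpa [Finset.mem_image] using hvi
  choose f hf using hx
  have hfinj : Function.Injective f := by
    intro i j hij
    apply hv
    rw [← hf i, ← hf j, hij]
  let σ : Equiv.Perm (Fin n) := Equiv.ofBijective f (Finite.injective_iff_bijective.mp hfinj)
  calc F u = F (u ∘ σ) := (hF u σ).symm
    _ = F v := by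
        congr 1
        funext i
        exact hf i

private lemma snoc_inj {n : ℕ} {x : Fin n → E} (hx : Function.Injective x) {a : E}
    (ha : a ∉ Finset.image x Finset.univ) :
    Function.Injective (Fin.snoc x a : Fin (n + 1) → E) := by
  have ha' : a ∉ Set.range x := by
    rintro ⟨i, rfl⟩
    exact ha (Finset.mem_image_of_mem x (Finset.mem_univ i))
  rw [Fin.snoc_eq_cons_rotate]
  exact (Fin.cons_injective_of_injective ha' hx).comp (finRotate _).injective

private lemma image_snoc {n : ℕ} (x : Fin n → E) (a : E) :
    Finset.image (Fin.snoc x a : Fin (n + 1) → E) Finset.univ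
      = insert a (Finset.image x Finset.univ) := by
  ext y
  simp only [Finset.mem_image, Finset.mem_univ, true_and, Finset.mem_insert]
  constructor
  · rintro ⟨i, rfl⟩
    induction i using Fin.lastCases with
    | last => left; simp
    | cast i => right; exact ⟨i, by simp⟩
  · rintro (rfl | ⟨i, rfl⟩)
    · exact ⟨Fin.last n, by simp⟩
    · exact ⟨i.castSucc, by simp⟩

private lemma exists_enum {n : ℕ} {s : Finset E} (hs : s.card = n) :
    ∃ x : Fin n → E, Function.Injective x ∧ Finset.image x Finset.univ = s := by
  let e : s ≃ Fin n := s.equivFinOfCardEq hs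
  refine ⟨fun i => (e.symm i : E), ?_, ?_⟩
  · intro i j hij
    exact e.symm.injective (Subtype.ext hij)
  · ext y
    simp only [Finset.mem_image, Finset.mem_univ, true_and]
    constructor
    · rintro ⟨i, rfl⟩; exact (e.symm i).2
    · intro hy; exact ⟨e ⟨y, hy⟩, by simp⟩

private lemma sep_iff {d : ℕ} {φ : (Fin (d + 1) → E) → ℝ} (hsym : IsSymmetricFn φ)
    {s : Finset E} {a b : E} (ha : a ∉ s) (hb : b ∉ s)
    {x : Fin d → E} (hx : Function.Injective x) (him : Finset.image x Finset.univ = s) :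
    Separates φ s a b ↔ φ (Fin.snoc x a) * φ (Fin.snoc x b) < 0 := by
  constructor
  · rintro ⟨y, hy, hyim, hlt⟩
    have hax : a ∉ Finset.image x Finset.univ := by rw [him]; exact ha
    have hbx : b ∉ Finset.image x Finset.univ := by rw [him]; exact hb
    have ea : φ (Fin.snoc y a) = φ (Fin.snoc x a) :=
      symEq hsym (snoc_inj hx hax) (by rw [image_snoc, image_snoc, hyim, him])
    have eb : φ (Fin.snoc y b) = φ (Fin.snoc x b) :=
      symEq hsym (snoc_inj hx hbx) (by rw [image_snoc, image_snoc, hyim, him])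
    rwa [ea, eb] at hlt
  · intro h
    exact ⟨x, hx, him, h⟩

private lemma even_three {p q r : ℝ} (h : 0 < p * q * r) :
    ((if p < 0 then 1 else 0) + (if q < 0 then 1 else 0) + (if r < 0 then 1 else 0)) % 2 = 0 := by
  by_cases hp : p < 0 <;> by_cases hq : q < 0 <;> by_cases hr : r < 0 <;>
    simp [hp, hq, hr]
  · nlinarith [mul_pos_of_neg_of_neg hp hq]
  · nlinarith [mul_nonneg (not_lt.mp hq) (not_lt.mp hr)]
  · nlinarith [mul_nonneg (not_lt.mp hp) (not_lt.mp hr)]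
  · nlinarith [mul_nonneg (not_lt.mp hp) (not_lt.mp hq)]

private lemma sepCount_eq_card [Fintype E] {d : ℕ} (φ : (Fin (d + 1) → E) → ℝ) (a b : E) :
    sepCount φ a b = (Finset.univ.filter fun s : Finset E =>
      s.card = d ∧ a ∉ s ∧ b ∉ s ∧ Separates φ s a b).card := by
  have h : {s : Finset E | s.card = d ∧ a ∉ s ∧ b ∉ s ∧ Separates φ s a b}.toFinset
      = Finset.univ.filter fun s : Finset E =>
        s.card = d ∧ a ∉ s ∧ b ∉ s ∧ Separates φ s a b := by
    ext s
    simp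
  rw [sepCount, Set.ncard_eq_toFinset_card', h]

private lemma key_parity [Fintype E] {d : ℕ} (hd : 1 ≤ d)
    (φ : (Fin (d + 1) → E) → ℝ) (hgen : IsGenericFn φ) (hsym : IsSymmetricFn φ)
    {a b c : E} (hab : a ≠ b) (hbc : b ≠ c) (hac : a ≠ c) :
    (sepCount φ a b + sepCount φ b c + sepCount φ a c) % 2 = 0 := by
  classical
  have hsplit : ∀ (u v w : E), u ≠ v → u ≠ w → v ≠ w →
      sepCount φ u v = (Finset.univ.filter fun s : Finset E =>
          (s.card = d ∧ u ∉ s ∧ v ∉ s ∧ w ∉ s) ∧ Separates φ s u v).card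
        + (Finset.univ.filter fun t : Finset E =>
          (t.card = d - 1 ∧ u ∉ t ∧ v ∉ t ∧ w ∉ t) ∧ Separates φ (insert w t) u v).card := by
    intro u v w huv huw hvw
    rw [sepCount_eq_card]
    have hbase := Finset.card_filter_add_card_filter_not
      (s := Finset.univ.filter fun s : Finset E =>
        s.card = d ∧ u ∉ s ∧ v ∉ s ∧ Separates φ s u v) (p := fun s => w ∈ s)
    rw [Finset.filter_filter, Finset.filter_filter] at hbase
    have e1 : (Finset.univ.filter fun s : Finset E =>
        (s.card = d ∧ u ∉ s ∧ v ∉ s ∧ Separates φ s u v) ∧ ¬ w ∈ s)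
        = (Finset.univ.filter fun s : Finset E =>
          (s.card = d ∧ u ∉ s ∧ v ∉ s ∧ w ∉ s) ∧ Separates φ s u v) := by
      apply Finset.filter_congr
      intro s _
      constructor
      · rintro ⟨⟨h1, h2, h3, h4⟩, h5⟩; exact ⟨⟨h1, h2, h3, h5⟩, h4⟩
      · rintro ⟨⟨h1, h2, h3, h5⟩, h4⟩; exact ⟨⟨h1, h2, h3, h4⟩, h5⟩
    have e2 : (Finset.univ.filter fun s : Finset E =>
        (s.card = d ∧ u ∉ s ∧ v ∉ s ∧ Separates φ s u v) ∧ w ∈ s).card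
        = (Finset.univ.filter fun t : Finset E =>
          (t.card = d - 1 ∧ u ∉ t ∧ v ∉ t ∧ w ∉ t) ∧ Separates φ (insert w t) u v).card := by
      refine Finset.card_bij' (fun s _ => s.erase w) (fun t _ => insert w t)
        ?_ ?_ ?_ ?_
      · intro s hs
        simp only [Finset.mem_filter, Finset.mem_univ, true_and] at hs
        obtain ⟨⟨hcard, hu, hv2, hsep⟩, hw⟩ := hs
        simp only [Finset.mem_filter, Finset.mem_univ, true_and]
        refine ⟨⟨by rw [Finset.card_erase_of_mem hw, hcard], ?_, ?_,
          Finset.notMem_erase w s⟩, ?_⟩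
        · exact fun hmem => hu (Finset.mem_of_mem_erase hmem)
        · exact fun hmem => hv2 (Finset.mem_of_mem_erase hmem)
        · rwa [Finset.insert_erase hw]
      · intro t ht
        simp only [Finset.mem_filter, Finset.mem_univ, true_and] at ht
        obtain ⟨⟨hcard, hu, hv2, hw⟩, hsep⟩ := ht
        simp only [Finset.mem_filter, Finset.mem_univ, true_and]
        refine ⟨⟨?_, ?_, ?_, hsep⟩, Finset.mem_insert_self w t⟩
        · rw [Finset.card_insert_of_notMem hw, hcard]; omega
        · simp only [Finset.mem_insert]
          rintro (rfl | hmem)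
          · exact huw rfl
          · exact hu hmem
        · simp only [Finset.mem_insert]
          rintro (rfl | hmem)
          · exact hvw rfl
          · exact hv2 hmem
      · intro s hs
        simp only [Finset.mem_filter, Finset.mem_univ, true_and] at hs
        exact Finset.insert_erase hs.2
      · intro t ht
        simp only [Finset.mem_filter, Finset.mem_univ, true_and] at ht
        exact Finset.erase_insert ht.1.2.2.2
    rw [e1, e2] at hbase
    omega
  rw [hsplit a b c hab hac hbc, hsplit b c a hbc (Ne.symm hab) (Ne.symm hac),
    hsplit a c b hac hab (Ne.symm hbc)]
  have hX : ((Finset.univ.filter fun s : Finset E =>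
        (s.card = d ∧ a ∉ s ∧ b ∉ s ∧ c ∉ s) ∧ Separates φ s a b).card
      + (Finset.univ.filter fun s : Finset E =>
        (s.card = d ∧ b ∉ s ∧ c ∉ s ∧ a ∉ s) ∧ Separates φ s b c).card
      + (Finset.univ.filter fun s : Finset E =>
        (s.card = d ∧ a ∉ s ∧ c ∉ s ∧ b ∉ s) ∧ Separates φ s a c).card) % 2 = 0 := by
    rw [Finset.card_filter, Finset.card_filter, Finset.card_filter,
      ← Finset.sum_add_distrib, ← Finset.sum_add_distrib]
    rw [← Nat.even_iff]
    apply Finset.even_sum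
    intro s _
    by_cases hgate : s.card = d ∧ a ∉ s ∧ b ∉ s ∧ c ∉ s
    · obtain ⟨hcard, ha', hb', hc'⟩ := hgate
      obtain ⟨x, hx, him⟩ := exists_enum hcard
      have nza : φ (Fin.snoc x a) ≠ 0 := hgen _ (snoc_inj hx (by rw [him]; exact ha'))
      have nzb : φ (Fin.snoc x b) ≠ 0 := hgen _ (snoc_inj hx (by rw [him]; exact hb'))
      have nzc : φ (Fin.snoc x c) ≠ 0 := hgen _ (snoc_inj hx (by rw [him]; exact hc'))
      have hpos : 0 < (φ (Fin.snoc x a) * φ (Fin.snoc x b))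
          * (φ (Fin.snoc x b) * φ (Fin.snoc x c))
          * (φ (Fin.snoc x a) * φ (Fin.snoc x c)) := by
        have hsq : (φ (Fin.snoc x a) * φ (Fin.snoc x b))
            * (φ (Fin.snoc x b) * φ (Fin.snoc x c))
            * (φ (Fin.snoc x a) * φ (Fin.snoc x c))
            = (φ (Fin.snoc x a) * φ (Fin.snoc x b) * φ (Fin.snoc x c)) ^ 2 := by ring
        rw [hsq]
        exact lt_of_le_of_ne (sq_nonneg _)
          (Ne.symm (pow_ne_zero 2 (mul_ne_zero (mul_ne_zero nza nzb) nzc)))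
      have e1 : ((s.card = d ∧ a ∉ s ∧ b ∉ s ∧ c ∉ s) ∧ Separates φ s a b)
          ↔ φ (Fin.snoc x a) * φ (Fin.snoc x b) < 0 := by
        rw [sep_iff hsym ha' hb' hx him]
        exact ⟨fun h => h.2, fun h => ⟨⟨hcard, ha', hb', hc'⟩, h⟩⟩
      have e2 : ((s.card = d ∧ b ∉ s ∧ c ∉ s ∧ a ∉ s) ∧ Separates φ s b c)
          ↔ φ (Fin.snoc x b) * φ (Fin.snoc x c) < 0 := by
        rw [sep_iff hsym hb' hc' hx him]
        exact ⟨fun h => h.2, fun h => ⟨⟨hcard, hb', hc', ha'⟩, h⟩⟩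
      have e3 : ((s.card = d ∧ a ∉ s ∧ c ∉ s ∧ b ∉ s) ∧ Separates φ s a c)
          ↔ φ (Fin.snoc x a) * φ (Fin.snoc x c) < 0 := by
        rw [sep_iff hsym ha' hc' hx him]
        exact ⟨fun h => h.2, fun h => ⟨⟨hcard, ha', hc', hb'⟩, h⟩⟩
      simp only [e1, e2, e3]
      exact Nat.even_iff.mpr (even_three hpos)
    · have n1 : ¬((s.card = d ∧ a ∉ s ∧ b ∉ s ∧ c ∉ s) ∧ Separates φ s a b) := by tauto
      have n2 : ¬((s.card = d ∧ b ∉ s ∧ c ∉ s ∧ a ∉ s) ∧ Separates φ s b c) := by tauto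
      have n3 : ¬((s.card = d ∧ a ∉ s ∧ c ∉ s ∧ b ∉ s) ∧ Separates φ s a c) := by tauto
      simp [n1, n2, n3]
  have hY : ((Finset.univ.filter fun t : Finset E =>
        (t.card = d - 1 ∧ a ∉ t ∧ b ∉ t ∧ c ∉ t) ∧ Separates φ (insert c t) a b).card
      + (Finset.univ.filter fun t : Finset E =>
        (t.card = d - 1 ∧ b ∉ t ∧ c ∉ t ∧ a ∉ t) ∧ Separates φ (insert a t) b c).card
      + (Finset.univ.filter fun t : Finset E =>
        (t.card = d - 1 ∧ a ∉ t ∧ c ∉ t ∧ b ∉ t) ∧ Separates φ (insert b t) a c).card) % 2 = 0 := by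
    rw [Finset.card_filter, Finset.card_filter, Finset.card_filter,
      ← Finset.sum_add_distrib, ← Finset.sum_add_distrib]
    rw [← Nat.even_iff]
    apply Finset.even_sum
    intro t _
    by_cases hgate : t.card = d - 1 ∧ a ∉ t ∧ b ∉ t ∧ c ∉ t
    · obtain ⟨hcard, ha', hb', hc'⟩ := hgate
      have hcc : (insert c t).card = d := by
        rw [Finset.card_insert_of_notMem hc', hcard]; omega
      have hca : (insert a t).card = d := by
        rw [Finset.card_insert_of_notMem ha', hcard]; omega
      have hcb : (insert b t).card = d := by
        rw [Finset.card_insert_of_notMem hb', hcard]; omega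
      obtain ⟨xc, hxc, himc⟩ := exists_enum hcc
      obtain ⟨xa, hxa, hima⟩ := exists_enum hca
      obtain ⟨xb, hxb, himb⟩ := exists_enum hcb
      have hainc : a ∉ insert c t := by
        simp only [Finset.mem_insert]; rintro (rfl | h); exacts [hac rfl, ha' h]
      have hbinc : b ∉ insert c t := by
        simp only [Finset.mem_insert]; rintro (rfl | h); exacts [hbc rfl, hb' h]
      have hbina : b ∉ insert a t := by
        simp only [Finset.mem_insert]; rintro (rfl | h); exacts [hab rfl, hb' h]
      have hcina : c ∉ insert a t := by
        simp only [Finset.mem_insert]; rintro (rfl | h); exacts [hac rfl, hc' h]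
      have hainb : a ∉ insert b t := by
        simp only [Finset.mem_insert]; rintro (rfl | h); exacts [hab rfl, ha' h]
      have hcinb : c ∉ insert b t := by
        simp only [Finset.mem_insert]; rintro (rfl | h); exacts [hbc rfl, hc' h]
      -- cross equalities coming from symmetry
      have eA : φ (Fin.snoc xa c) = φ (Fin.snoc xc a) := by
        apply symEq hsym (snoc_inj hxc (by rw [himc]; exact hainc))
        rw [image_snoc, image_snoc, hima, himc, Finset.insert_comm]
      have eB : φ (Fin.snoc xb c) = φ (Fin.snoc xc b) := by
        apply symEq hsym (snoc_inj hxc (by rw [himc]; exact hbinc))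
        rw [image_snoc, image_snoc, himb, himc, Finset.insert_comm]
      have eC : φ (Fin.snoc xb a) = φ (Fin.snoc xa b) := by
        apply symEq hsym (snoc_inj hxa (by rw [hima]; exact hbina))
        rw [image_snoc, image_snoc, himb, hima, Finset.insert_comm]
      have nz1 : φ (Fin.snoc xc a) ≠ 0 := hgen _ (snoc_inj hxc (by rw [himc]; exact hainc))
      have nz2 : φ (Fin.snoc xc b) ≠ 0 := hgen _ (snoc_inj hxc (by rw [himc]; exact hbinc))
      have nz3 : φ (Fin.snoc xa b) ≠ 0 := hgen _ (snoc_inj hxa (by rw [hima]; exact hbina))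
      have hpos : 0 < (φ (Fin.snoc xc a) * φ (Fin.snoc xc b))
          * (φ (Fin.snoc xa b) * φ (Fin.snoc xa c))
          * (φ (Fin.snoc xb a) * φ (Fin.snoc xb c)) := by
        rw [eA, eB, eC]
        have hsq : (φ (Fin.snoc xc a) * φ (Fin.snoc xc b))
            * (φ (Fin.snoc xa b) * φ (Fin.snoc xc a))
            * (φ (Fin.snoc xa b) * φ (Fin.snoc xc b))
            = (φ (Fin.snoc xc a) * φ (Fin.snoc xc b) * φ (Fin.snoc xa b)) ^ 2 := by ring
        rw [hsq]
        exact lt_of_le_of_ne (sq_nonneg _)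
          (Ne.symm (pow_ne_zero 2 (mul_ne_zero (mul_ne_zero nz1 nz2) nz3)))
      have e1 : ((t.card = d - 1 ∧ a ∉ t ∧ b ∉ t ∧ c ∉ t) ∧ Separates φ (insert c t) a b)
          ↔ φ (Fin.snoc xc a) * φ (Fin.snoc xc b) < 0 := by
        rw [sep_iff hsym hainc hbinc hxc himc]
        exact ⟨fun h => h.2, fun h => ⟨⟨hcard, ha', hb', hc'⟩, h⟩⟩
      have e2 : ((t.card = d - 1 ∧ b ∉ t ∧ c ∉ t ∧ a ∉ t) ∧ Separates φ (insert a t) b c)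
          ↔ φ (Fin.snoc xa b) * φ (Fin.snoc xa c) < 0 := by
        rw [sep_iff hsym hbina hcina hxa hima]
        exact ⟨fun h => h.2, fun h => ⟨⟨hcard, hb', hc', ha'⟩, h⟩⟩
      have e3 : ((t.card = d - 1 ∧ a ∉ t ∧ c ∉ t ∧ b ∉ t) ∧ Separates φ (insert b t) a c)
          ↔ φ (Fin.snoc xb a) * φ (Fin.snoc xb c) < 0 := by
        rw [sep_iff hsym hainb hcinb hxb himb]
        exact ⟨fun h => h.2, fun h => ⟨⟨hcard, ha', hc', hb'⟩, h⟩⟩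
      simp only [e1, e2, e3]
      exact Nat.even_iff.mpr (even_three hpos)
    · have n1 : ¬((t.card = d - 1 ∧ a ∉ t ∧ b ∉ t ∧ c ∉ t)
          ∧ Separates φ (insert c t) a b) := by tauto
      have n2 : ¬((t.card = d - 1 ∧ b ∉ t ∧ c ∉ t ∧ a ∉ t)
          ∧ Separates φ (insert a t) b c) := by tauto
      have n3 : ¬((t.card = d - 1 ∧ a ∉ t ∧ c ∉ t ∧ b ∉ t)
          ∧ Separates φ (insert b t) a c) := by tauto
      simp [n1, n2, n3]
  omega

end OrchardAux

theorem stmt_4 {E : Type*} [Fintype E] [DecidableEq E] (d : ℕ) (hd : 1 ≤ d)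
    (hcard : d + 1 ≤ Fintype.card E)
    (φ : (Fin (d + 1) → E) → ℝ)
    (hgen : IsGenericFn φ) (hsym : IsSymmetricFn φ)
    (a b c : E) (h1 : ¬ OrchardSym φ a b) (h2 : ¬ OrchardSym φ b c) :
    OrchardSym φ a c := by
  by_cases haceq : a = c
  · exact Or.inl haceq
  simp only [OrchardSym, not_or] at h1 h2
  push_neg at h1 h2
  obtain ⟨hab, hmab⟩ := h1
  obtain ⟨hbc, hmbc⟩ := h2
  have key := key_parity hd φ hgen hsym hab hbc haceq
  right
  omega
end

section
/- Let E be a finite set, d ≥ 1, and let φ be a generic antisymmetric function on the injective (d+1)-tuples of E. Then the Orchard relation ∼_φ has at most two equivalence classes: for any a, b, c ∈ E, if a ≁_φ b and b ≁_φ c then a ∼_φ c. -/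
open Finset

/-!
For distinct `a, b, c`, split each of `n(a,b)`, `n(b,c)`, `n(a,c)` according to whether the
separating set contains the third point. A `d`-set `s` avoiding all three separates an even
number of the three pairs, since the products `φ(s,a)φ(s,b)`, `φ(s,b)φ(s,c)`, `φ(s,a)φ(s,c)`
multiply to a square. For a `(d-1)`-set `t` avoiding all three, the sets `t ∪ {c}`, `t ∪ {a}`,
`t ∪ {b}` separate an odd number of the pairs `ab`, `bc`, `ac`, because by antisymmetry the
corresponding product is minus a square. Hence
`n(a,b) + n(b,c) + n(a,c) ≡ C(|E|-3, d-1) (mod 2)`, and two non-relations force the third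
relation.
-/

section OrchardParity

variable {E : Type*}

section Enumerations

variable [DecidableEq E]

def Enumerates {k : ℕ} (x : Fin k → E) (s : Finset E) : Prop :=
  Function.Injective x ∧ image x univ = s

lemma coe_image_univ_eq_range {k : ℕ} (x : Fin k → E) :
    (image x univ : Set E) = Set.range x := by
  rw [coe_image, coe_univ, Set.image_univ]

lemma exists_enumerates {k : ℕ} {s : Finset E} (h : s.card = k) :
    ∃ x : Fin k → E, Enumerates x s := by
  let e := s.equivFinOfCardEq h
  refine ⟨Subtype.val ∘ e.symm, Subtype.val_injective.comp e.symm.injective, ?_⟩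
  apply coe_injective
  rw [coe_image_univ_eq_range, Set.range_comp, e.symm.range_eq_univ, Set.image_univ,
    Subtype.range_coe]

lemma Enumerates.notMem_range {k : ℕ} {x : Fin k → E} {s : Finset E} (hx : Enumerates x s)
    {a : E} (ha : a ∉ s) : a ∉ Set.range x := by
  rwa [← coe_image_univ_eq_range, hx.2]

lemma Enumerates.snoc {k : ℕ} {x : Fin k → E} {s : Finset E} (hx : Enumerates x s)
    {a : E} (ha : a ∉ s) : Enumerates (Fin.snoc x a : Fin (k + 1) → E) (insert a s) := by
  refine ⟨Fin.snoc_injective_of_injective hx.1 (hx.notMem_range ha), coe_injective ?_⟩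
  rw [coe_image_univ_eq_range, Fin.range_snoc, ← coe_image_univ_eq_range, hx.2, coe_insert]

lemma Enumerates.exists_perm {k : ℕ} {x y : Fin k → E} {s : Finset E} (hx : Enumerates x s)
    (hy : Enumerates y s) : ∃ σ : Equiv.Perm (Fin k), y = x ∘ σ := by
  have hr : Set.range y = Set.range x := by
    rw [← coe_image_univ_eq_range, ← coe_image_univ_eq_range, hx.2, hy.2]
  refine ⟨(Equiv.ofInjective y hy.1).trans ((Equiv.setCongr hr).trans
    (Equiv.ofInjective x hx.1).symm), funext fun i => ?_⟩
  simp only [Function.comp_apply, Equiv.trans_apply, Equiv.setCongr_apply,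
    Equiv.apply_ofInjective_symm hx.1]
  rfl

end Enumerations

lemma Fin.exists_perm_snoc_comp {k : ℕ} (σ : Equiv.Perm (Fin k)) :
    ∃ τ : Equiv.Perm (Fin (k + 1)), ∀ (x : Fin k → E) (a : E),
      (Fin.snoc (x ∘ σ) a : Fin (k + 1) → E) = Fin.snoc x a ∘ τ := by
  refine ⟨finSuccEquivLast.symm.permCongr (Equiv.optionCongr σ), fun x a => funext fun i => ?_⟩
  induction i using Fin.lastCases <;>
    simp [Equiv.permCongr_apply, finSuccEquivLast_castSucc, finSuccEquivLast_symm_some]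

namespace IsAntisymmetricFn

variable {k : ℕ}

lemma mul_comp_perm {φ : (Fin k → E) → ℝ} (hanti : IsAntisymmetricFn φ)
    (y z : Fin k → E) (τ : Equiv.Perm (Fin k)) :
    φ (y ∘ τ) * φ (z ∘ τ) = φ y * φ z := by
  rw [hanti y τ, hanti z τ]
  rcases Int.units_eq_one_or (Equiv.Perm.sign τ) with h | h <;> simp [h]

lemma snoc_snoc_swap {φ : (Fin (k + 2) → E) → ℝ} (hanti : IsAntisymmetricFn φ)
    (y : Fin k → E) (p q : E) :
    φ (Fin.snoc (Fin.snoc y p) q) = -φ (Fin.snoc (Fin.snoc y q) p) := by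
  have hne : Fin.last (k + 1) ≠ (Fin.last k).castSucc := (Fin.castSucc_lt_last _).ne'
  have hswap : (Fin.snoc (Fin.snoc y q) p : Fin (k + 2) → E) ∘
      Equiv.swap (Fin.last (k + 1)) (Fin.last k).castSucc = Fin.snoc (Fin.snoc y p) q := by
    funext i
    induction i using Fin.lastCases with
    | last => simp
    | cast j =>
      induction j using Fin.lastCases with
      | last => simp
      | cast i =>
        have h₁ : i.castSucc.castSucc ≠ Fin.last (k + 1) := (Fin.castSucc_lt_last _).ne
        have h₂ : i.castSucc.castSucc ≠ (Fin.last k).castSucc :=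
          (Fin.castSucc_injective _).ne (Fin.castSucc_lt_last i).ne
        simp [Equiv.swap_apply_of_ne_of_ne h₁ h₂]
  rw [← hswap, hanti, Equiv.Perm.sign_swap hne]
  simp

end IsAntisymmetricFn

noncomputable def negParity (u : ℝ) : ZMod 2 := if u < 0 then 1 else 0

lemma negParity_mul {u v : ℝ} (hu : u ≠ 0) (hv : v ≠ 0) :
    negParity (u * v) = negParity u + negParity v := by
  rcases hu.lt_or_gt with hu | hu <;> rcases hv.lt_or_gt with hv | hv <;>
    simp [negParity, mul_neg_iff, hu, hv, hu.not_gt, hv.not_gt, CharTwo.add_self_eq_zero]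

lemma negParity_neg {u : ℝ} (hu : u ≠ 0) : negParity (-u) = negParity u + 1 := by
  simpa [negParity] using negParity_mul hu (neg_ne_zero.2 one_ne_zero)

section Separation

variable [DecidableEq E] {d : ℕ} {φ : (Fin (d + 1) → E) → ℝ}

lemma separates_iff (hanti : IsAntisymmetricFn φ) {s : Finset E} {x : Fin d → E}
    (hx : Enumerates x s) (a b : E) :
    Separates φ s a b ↔ φ (Fin.snoc x a) * φ (Fin.snoc x b) < 0 := by
  refine ⟨fun ⟨y, hy, hys, hsep⟩ => ?_, fun h => ⟨x, hx.1, hx.2, h⟩⟩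
  obtain ⟨σ, rfl⟩ := hx.exists_perm ⟨hy, hys⟩
  obtain ⟨τ, hτ⟩ := Fin.exists_perm_snoc_comp (E := E) σ
  rwa [hτ, hτ, hanti.mul_comp_perm] at hsep

open Classical in
noncomputable def sepParity (φ : (Fin (d + 1) → E) → ℝ) (s : Finset E) (a b : E) : ZMod 2 :=
  if Separates φ s a b then 1 else 0

lemma sepParity_eq (hanti : IsAntisymmetricFn φ) {s : Finset E} {x : Fin d → E}
    (hx : Enumerates x s) (a b : E) :
    sepParity φ s a b = negParity (φ (Fin.snoc x a) * φ (Fin.snoc x b)) := by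
  simp only [sepParity, negParity, separates_iff hanti hx]

lemma IsGenericFn.snoc_ne_zero (hgen : IsGenericFn φ) {s : Finset E} {x : Fin d → E}
    (hx : Enumerates x s) {a : E} (ha : a ∉ s) : φ (Fin.snoc x a) ≠ 0 :=
  hgen _ (hx.snoc ha).1

lemma sepParity_add_add_eq_zero (hgen : IsGenericFn φ) (hanti : IsAntisymmetricFn φ)
    {s : Finset E} (hs : s.card = d) {a b c : E} (ha : a ∉ s) (hb : b ∉ s) (hc : c ∉ s) :
    sepParity φ s a b + sepParity φ s b c + sepParity φ s a c = 0 := by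
  obtain ⟨x, hx⟩ := exists_enumerates hs
  rw [sepParity_eq hanti hx, sepParity_eq hanti hx, sepParity_eq hanti hx,
    negParity_mul (hgen.snoc_ne_zero hx ha) (hgen.snoc_ne_zero hx hb),
    negParity_mul (hgen.snoc_ne_zero hx hb) (hgen.snoc_ne_zero hx hc),
    negParity_mul (hgen.snoc_ne_zero hx ha) (hgen.snoc_ne_zero hx hc)]
  ring_nf
  reduce_mod_char

end Separation

lemma sepParity_insert_add_add_eq_one [DecidableEq E] {e : ℕ} {φ : (Fin (e + 2) → E) → ℝ}
    (hgen : IsGenericFn φ) (hanti : IsAntisymmetricFn φ) {t : Finset E} (ht : t.card = e)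
    {a b c : E} (ha : a ∉ t) (hb : b ∉ t) (hc : c ∉ t) (hab : a ≠ b) (hbc : b ≠ c)
    (hac : a ≠ c) :
    sepParity φ (insert c t) a b + sepParity φ (insert a t) b c
      + sepParity φ (insert b t) a c = 1 := by
  obtain ⟨y, hy⟩ := exists_enumerates ht
  have hca₀ : φ (Fin.snoc (Fin.snoc y c) a) ≠ 0 :=
    hgen.snoc_ne_zero (hy.snoc hc) (by simp [hac, ha])
  have hcb₀ : φ (Fin.snoc (Fin.snoc y c) b) ≠ 0 :=
    hgen.snoc_ne_zero (hy.snoc hc) (by simp [hbc, hb])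
  have hab₀ : φ (Fin.snoc (Fin.snoc y a) b) ≠ 0 :=
    hgen.snoc_ne_zero (hy.snoc ha) (by simp [hab.symm, hb])
  rw [sepParity_eq hanti (hy.snoc hc), sepParity_eq hanti (hy.snoc ha),
    sepParity_eq hanti (hy.snoc hb), hanti.snoc_snoc_swap y a c, hanti.snoc_snoc_swap y b a,
    hanti.snoc_snoc_swap y b c, mul_neg, neg_mul_neg, negParity_neg (mul_ne_zero hab₀ hca₀),
    negParity_mul hca₀ hcb₀, negParity_mul hab₀ hca₀, negParity_mul hab₀ hcb₀]
  ring_nf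
  reduce_mod_char

lemma sum_powersetCard_succ_insert [DecidableEq E] {M : Type*} [AddCommMonoid M] {p : E}
    {U : Finset E} (hp : p ∉ U) (k : ℕ) (f : Finset E → M) :
    ∑ s ∈ powersetCard (k + 1) (insert p U), f s
      = ∑ s ∈ powersetCard (k + 1) U, f s + ∑ t ∈ powersetCard k U, f (insert p t) := by
  have hpt {t : Finset E} (ht : t ∈ powersetCard k U) : p ∉ t :=
    fun h => hp ((mem_powersetCard.1 ht).1 h)
  rw [powersetCard_succ_insert hp, sum_union, sum_image]
  · intro t ht t' ht' h
    simpa [erase_insert (hpt ht), erase_insert (hpt ht')] using congrArg (·.erase p) h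
  · refine disjoint_left.2 fun s hs hs' => ?_
    obtain ⟨t, -, rfl⟩ := mem_image.1 hs'
    exact hp ((mem_powersetCard.1 hs).1 (mem_insert_self p t))

lemma compl_pair_eq_insert_compl [Fintype E] [DecidableEq E] {x y z : E} (hxz : x ≠ z)
    (hyz : y ≠ z) : ({x, y}ᶜ : Finset E) = insert z {x, y, z}ᶜ := by
  ext w
  rcases eq_or_ne w z with rfl | hw
  · simp [hxz.symm, hyz.symm]
  · simp [hw]

lemma natCast_sepCount [Fintype E] [DecidableEq E] {d : ℕ} (φ : (Fin (d + 1) → E) → ℝ)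
    (a b : E) :
    (sepCount φ a b : ZMod 2) = ∑ s ∈ powersetCard d {a, b}ᶜ, sepParity φ s a b := by
  classical
  have hset : {s : Finset E | s.card = d ∧ a ∉ s ∧ b ∉ s ∧ Separates φ s a b}
      = ↑{s ∈ powersetCard d {a, b}ᶜ | Separates φ s a b} := by
    ext s
    simp only [Set.mem_ofPred_eq, coe_filter, mem_powersetCard, subset_compl_iff_disjoint_right,
      disjoint_insert_right, disjoint_singleton_right]
    tauto
  rw [sepCount, hset, Set.ncard_coe_finset, natCast_card_filter]
  rfl

lemma natCast_sepCount_add_add [Fintype E] [DecidableEq E] {e : ℕ}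
    {φ : (Fin (e + 2) → E) → ℝ} (hgen : IsGenericFn φ) (hanti : IsAntisymmetricFn φ)
    {a b c : E} (hab : a ≠ b) (hbc : b ≠ c) (hac : a ≠ c) :
    (sepCount φ a b + sepCount φ b c + sepCount φ a c : ZMod 2)
      = (Fintype.card E - 3).choose e := by
  rw [natCast_sepCount, natCast_sepCount, natCast_sepCount, compl_pair_eq_insert_compl hac hbc,
    compl_pair_eq_insert_compl hab.symm hac.symm, compl_pair_eq_insert_compl hab hbc.symm,
    pair_comm c a, insert_comm b a, pair_comm c b]
  set U : Finset E := {a, b, c}ᶜ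
  have haU : a ∉ U := by simp [U]
  have hbU : b ∉ U := by simp [U]
  have hcU : c ∉ U := by simp [U]
  have hcardU : U.card = Fintype.card E - 3 := by
    rw [card_compl, card_insert_of_notMem (by simp [hab, hac]), card_pair hbc]
  rw [sum_powersetCard_succ_insert hcU, sum_powersetCard_succ_insert haU,
    sum_powersetCard_succ_insert hbU]
  calc _ = ∑ s ∈ powersetCard (e + 1) U,
          (sepParity φ s a b + sepParity φ s b c + sepParity φ s a c)
        + ∑ t ∈ powersetCard e U, (sepParity φ (insert c t) a b + sepParity φ (insert a t) b c
          + sepParity φ (insert b t) a c) := by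
        simp only [sum_add_distrib]
        abel
    _ = ∑ s ∈ powersetCard (e + 1) U, 0 + ∑ t ∈ powersetCard e U, 1 := by
        congr 1 <;> refine sum_congr rfl fun s hs => ?_ <;>
          obtain ⟨hsU, hs⟩ := mem_powersetCard.1 hs
        · exact sepParity_add_add_eq_zero hgen hanti hs (mt (@hsU a) haU) (mt (@hsU b) hbU)
            (mt (@hsU c) hcU)
        · exact sepParity_insert_add_add_eq_one hgen hanti hs (mt (@hsU a) haU)
            (mt (@hsU b) hbU) (mt (@hsU c) hcU) hab hbc hac
    _ = _ := by simp [hcardU]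

lemma orchardAnti_iff_of_ne [Fintype E] [DecidableEq E] {d : ℕ} {φ : (Fin (d + 1) → E) → ℝ}
    {x y : E} (h : x ≠ y) :
    OrchardAnti φ x y ↔ (sepCount φ x y : ZMod 2) = (Fintype.card E - 3).choose (d - 1) := by
  rw [OrchardAnti, or_iff_right h, ZMod.natCast_eq_natCast_iff']

end OrchardParity

theorem stmt_5_general {E : Type*} [Fintype E] [DecidableEq E] (d : ℕ) (hd : 1 ≤ d)
    (φ : (Fin (d + 1) → E) → ℝ)
    (hgen : IsGenericFn φ) (hanti : IsAntisymmetricFn φ)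
    (a b c : E) (h1 : ¬ OrchardAnti φ a b) (h2 : ¬ OrchardAnti φ b c) :
    OrchardAnti φ a c := by
  rcases eq_or_ne a c with hac | hac
  · exact Or.inl hac
  have hab : a ≠ b := fun h => h1 (Or.inl h)
  have hbc : b ≠ c := fun h => h2 (Or.inl h)
  obtain ⟨e, rfl⟩ : ∃ e, d = e + 1 := ⟨d - 1, by omega⟩
  have key := natCast_sepCount_add_add hgen hanti hab hbc hac
  rw [orchardAnti_iff_of_ne hab, Nat.add_sub_cancel] at h1
  rw [orchardAnti_iff_of_ne hbc, Nat.add_sub_cancel] at h2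
  rw [orchardAnti_iff_of_ne hac, Nat.add_sub_cancel]
  generalize (sepCount φ a b : ZMod 2) = x, (sepCount φ b c : ZMod 2) = y,
    (sepCount φ a c : ZMod 2) = z, ((Fintype.card E - 3).choose e : ZMod 2) = C at *
  revert x y z C
  decide

theorem stmt_5 {E : Type*} [Fintype E] [DecidableEq E] (d : ℕ) (hd : 1 ≤ d)
    (hcard : d + 1 ≤ Fintype.card E)
    (φ : (Fin (d + 1) → E) → ℝ)
    (hgen : IsGenericFn φ) (hanti : IsAntisymmetricFn φ)
    (a b c : E) (h1 : ¬ OrchardAnti φ a b) (h2 : ¬ OrchardAnti φ b c) :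
    OrchardAnti φ a c :=
  stmt_5_general d hd φ hgen hanti a b c h1 h2
end

section
/- Let E be a finite set, d ≥ 1, and let φ be a generic symmetric function on the injective (d+1)-tuples of E. For x ∈ E let μ(x) be the number of d-subsets {x₁,…,x_d} ⊆ E∖{x} with φ(x,x₁,…,x_d) > 0. Then two elements x, y ∈ E are Orchard equivalent with respect to φ if and only if μ(x) ≡ μ(y) (mod 2). -/
open Finset

/-! For `x ≠ y`, split the `d`-sets avoiding `x` according to whether they contain `y`. Those
containing `y` are the `(d+1)`-sets `T ∋ x, y` with `φ > 0` on `T`, and these contribute equally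
to `μ(x)` and `μ(y)`. The remaining ones are the `d`-subsets `s` of `E ∖ {x, y}`, and `s` is
counted in exactly one of `μ(x)`, `μ(y)` iff it separates `x` from `y`. Hence
`μ(x) + μ(y) ≡ n_φ(x, y) (mod 2)`. -/

open Function

section Enumeration

variable {ι E : Type*}

theorem Finset.image_univ_eq_iff_range_eq [DecidableEq E] [Fintype ι] {t : ι → E}
    {s : Finset E} : Finset.univ.image t = s ↔ Set.range t = s := by
  rw [← Finset.coe_inj, Finset.coe_image, Finset.coe_univ, Set.image_univ]

theorem Finset.exists_injective_range_eq_of_card_eq {n : ℕ} {s : Finset E} (hs : s.card = n) :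
    ∃ t : Fin n → E, Injective t ∧ Set.range t = s := by
  let e := s.equivFinOfCardEq hs
  refine ⟨(↑) ∘ e.symm, Subtype.val_injective.comp e.symm.injective, ?_⟩
  rw [Set.range_comp, e.symm.range_eq_univ, Set.image_univ, Subtype.range_coe]

theorem exists_perm_comp_eq_of_range_eq {t t' : ι → E} (ht : Injective t) (ht' : Injective t')
    (h : Set.range t' = Set.range t) : ∃ σ : Equiv.Perm ι, t ∘ σ = t' :=
  ⟨(Equiv.ofInjective t' ht').trans ((Equiv.setCongr h).trans (Equiv.ofInjective t ht).symm),
    funext fun _ => Equiv.apply_ofInjective_symm ht _⟩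

end Enumeration

section Symmetric

variable {E : Type*} {n : ℕ} {φ : (Fin n → E) → ℝ}

theorem IsSymmetricFn.apply_eq_of_range_eq (hsym : IsSymmetricFn φ) {t t' : Fin n → E}
    (ht : Injective t) (ht' : Injective t') (h : Set.range t' = Set.range t) : φ t' = φ t := by
  obtain ⟨σ, rfl⟩ := exists_perm_comp_eq_of_range_eq ht ht' h
  exact hsym t σ

variable [DecidableEq E]

-- A symmetric `φ` is a function of the set of entries; this is its sign on the `n`-set `T`.
def PositiveOn (φ : (Fin n → E) → ℝ) (T : Finset E) : Prop :=
  ∃ t : Fin n → E, Injective t ∧ Finset.univ.image t = T ∧ 0 < φ t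

theorem IsSymmetricFn.positiveOn_iff (hsym : IsSymmetricFn φ) {t : Fin n → E}
    (ht : Injective t) {T : Finset E} (hT : Set.range t = T) : PositiveOn φ T ↔ 0 < φ t := by
  refine ⟨fun ⟨t', ht', hT', hpos⟩ => ?_, fun hpos => ⟨t, ht, ?_, hpos⟩⟩
  · rwa [← hsym.apply_eq_of_range_eq ht ht'
      (by rw [hT, Finset.image_univ_eq_iff_range_eq.1 hT'])]
  · exact Finset.image_univ_eq_iff_range_eq.2 hT

end Symmetric

theorem mul_neg_iff_not_pos_iff_pos {R : Type*} [Ring R] [LinearOrder R] [IsStrictOrderedRing R]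
    {a b : R} (ha : a ≠ 0) (hb : b ≠ 0) : a * b < 0 ↔ ¬(0 < a ↔ 0 < b) := by
  rcases ha.lt_or_gt with ha | ha <;> rcases hb.lt_or_gt with hb | hb <;>
    simp [mul_neg_iff, ha, hb, ha.not_gt, hb.not_gt]

theorem Set.ncard_add_ncard_eq_ncard_symmDiff_add {α : Type*} {A B : Set α}
    (hA : A.Finite := by toFinite_tac) (hB : B.Finite := by toFinite_tac) :
    A.ncard + B.ncard = (symmDiff A B).ncard + 2 * (A ∩ B).ncard := by
  rw [Set.symmDiff_def, Set.ncard_union_eq disjoint_sdiff_sdiff hA.sdiff hB.sdiff,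
    ← Set.ncard_inter_add_ncard_sdiff_eq_ncard A B hA,
    ← Set.ncard_inter_add_ncard_sdiff_eq_ncard B A hB, Set.inter_comm B A]
  ring
section Links

variable {α : Type*} [DecidableEq α] (n : ℕ) {x y : α}

theorem ncard_insert_setOf_eq (Q : Finset α → Prop) :
    {s : Finset α | s.card = n ∧ x ∉ s ∧ Q (insert x s)}.ncard =
      {T : Finset α | T.card = n + 1 ∧ x ∈ T ∧ Q T}.ncard := by
  refine Set.ncard_congr (fun s _ => insert x s) ?_ ?_ ?_
  · rintro s ⟨hs, hx, hQ⟩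
    exact ⟨by rw [Finset.card_insert_of_notMem hx, hs], Finset.mem_insert_self x s, hQ⟩
  · rintro s t ⟨-, hxs, -⟩ ⟨-, hxt, -⟩ h
    rw [← Finset.erase_insert hxs, h, Finset.erase_insert hxt]
  · rintro T ⟨hT, hx, hQ⟩
    refine ⟨T.erase x, ⟨?_, Finset.notMem_erase x T, ?_⟩, Finset.insert_erase hx⟩
    · rw [Finset.card_erase_of_mem hx, hT, Nat.add_sub_cancel]
    · rwa [Finset.insert_erase hx]

variable [Finite α] (P : Finset α → Prop)

theorem ncard_link_eq_add (hxy : x ≠ y) :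
    {s : Finset α | s.card = n ∧ x ∉ s ∧ P (insert x s)}.ncard =
      {s : Finset α | s.card = n ∧ x ∉ s ∧ y ∉ s ∧ P (insert x s)}.ncard +
        {T : Finset α | T.card = n + 1 ∧ x ∈ T ∧ y ∈ T ∧ P T}.ncard := by
  rw [← Set.ncard_inter_add_ncard_sdiff_eq_ncard _ {s | y ∉ s}, ← ncard_insert_setOf_eq]
  congr 2 <;> ext s
  · simp only [Set.mem_inter_iff, Set.mem_ofPred_eq]
    tauto
  · simp only [Set.mem_sdiff, Set.mem_ofPred_eq, not_not, Finset.mem_insert, hxy.symm, false_or]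
    tauto

theorem ncard_link_mod_two_eq_iff (hxy : x ≠ y) :
    {s : Finset α | s.card = n ∧ x ∉ s ∧ P (insert x s)}.ncard % 2 =
        {s : Finset α | s.card = n ∧ y ∉ s ∧ P (insert y s)}.ncard % 2 ↔
      {s : Finset α | s.card = n ∧ x ∉ s ∧ y ∉ s ∧
        ¬(P (insert x s) ↔ P (insert y s))}.ncard % 2 = 0 := by
  have hcount := Set.ncard_add_ncard_eq_ncard_symmDiff_add
    (A := {s : Finset α | s.card = n ∧ x ∉ s ∧ y ∉ s ∧ P (insert x s)})
    (B := {s : Finset α | s.card = n ∧ y ∉ s ∧ x ∉ s ∧ P (insert y s)})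
  have hboth : {T : Finset α | T.card = n + 1 ∧ y ∈ T ∧ x ∈ T ∧ P T} =
      {T | T.card = n + 1 ∧ x ∈ T ∧ y ∈ T ∧ P T} := by
    ext T; simp only [Set.mem_ofPred_eq]; tauto
  have hsep : symmDiff {s : Finset α | s.card = n ∧ x ∉ s ∧ y ∉ s ∧ P (insert x s)}
      {s | s.card = n ∧ y ∉ s ∧ x ∉ s ∧ P (insert y s)} =
      {s | s.card = n ∧ x ∉ s ∧ y ∉ s ∧ ¬(P (insert x s) ↔ P (insert y s))} := by
    ext s; simp only [Set.mem_symmDiff, Set.mem_ofPred_eq]; tauto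
  rw [hsep] at hcount
  rw [ncard_link_eq_add n P hxy, ncard_link_eq_add n P hxy.symm, hboth]
  omega

end Links

section Orchard

variable {E : Type*} [DecidableEq E] {d : ℕ} {φ : (Fin (d + 1) → E) → ℝ} {s : Finset E}

theorem muCount_eq_ncard_positiveOn (hsym : IsSymmetricFn φ) (x : E) :
    muCount φ x = {s : Finset E | s.card = d ∧ x ∉ s ∧ PositiveOn φ (insert x s)}.ncard := by
  rw [muCount]
  congr 1
  ext s
  simp only [Set.mem_ofPred_eq]
  refine and_congr_right fun hs => and_congr_right fun hx => ?_
  have hcons {t : Fin d → E} (ht : Injective t) (hts : Set.range t = s) :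
      PositiveOn φ (insert x s) ↔ 0 < φ (Fin.cons x t) :=
    hsym.positiveOn_iff (Fin.cons_injective_of_injective (hts ▸ hx) ht)
      (by rw [Fin.range_cons, hts, Finset.coe_insert])
  constructor
  · rintro ⟨t, ht, hts, hpos⟩
    exact (hcons ht (Finset.image_univ_eq_iff_range_eq.1 hts)).2 hpos
  · intro hpos
    obtain ⟨t, ht, hts⟩ := s.exists_injective_range_eq_of_card_eq hs
    exact ⟨t, ht, Finset.image_univ_eq_iff_range_eq.2 hts, (hcons ht hts).1 hpos⟩

theorem separates_iff_s8 (hgen : IsGenericFn φ) (hsym : IsSymmetricFn φ) {a b : E}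
    (hs : s.card = d) (ha : a ∉ s) (hb : b ∉ s) :
    Separates φ s a b ↔ ¬(PositiveOn φ (insert a s) ↔ PositiveOn φ (insert b s)) := by
  have hsnoc {t : Fin d → E} (ht : Injective t) (hts : Set.range t = s) :
      φ (Fin.snoc t a) * φ (Fin.snoc t b) < 0 ↔
        ¬(PositiveOn φ (insert a s) ↔ PositiveOn φ (insert b s)) := by
    have hinj {c : E} (hc : c ∉ s) : Injective (Fin.snoc t c : Fin (d + 1) → E) :=
      Fin.snoc_injective_of_injective ht (hts ▸ hc)
    have hrange (c : E) : Set.range (Fin.snoc t c : Fin (d + 1) → E) = ↑(insert c s) := by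
      rw [Fin.range_snoc, hts, Finset.coe_insert]
    rw [hsym.positiveOn_iff (hinj ha) (hrange a), hsym.positiveOn_iff (hinj hb) (hrange b)]
    exact mul_neg_iff_not_pos_iff_pos (hgen _ (hinj ha)) (hgen _ (hinj hb))
  constructor
  · rintro ⟨t, ht, hts, hsep⟩
    exact (hsnoc ht (Finset.image_univ_eq_iff_range_eq.1 hts)).1 hsep
  · intro hsep
    obtain ⟨t, ht, hts⟩ := s.exists_injective_range_eq_of_card_eq hs
    exact ⟨t, ht, Finset.image_univ_eq_iff_range_eq.2 hts, (hsnoc ht hts).2 hsep⟩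

theorem sepCount_eq_ncard (hgen : IsGenericFn φ) (hsym : IsSymmetricFn φ) (a b : E) :
    sepCount φ a b = {s : Finset E | s.card = d ∧ a ∉ s ∧ b ∉ s ∧
      ¬(PositiveOn φ (insert a s) ↔ PositiveOn φ (insert b s))}.ncard := by
  rw [sepCount]
  congr 1
  ext s
  simp only [Set.mem_ofPred_eq]
  exact and_congr_right fun hs => and_congr_right fun ha => and_congr_right fun hb =>
    separates_iff_s8 hgen hsym hs ha hb

end Orchard

theorem stmt_8_general {E : Type*} [Fintype E] [DecidableEq E] (d : ℕ)
    (φ : (Fin (d + 1) → E) → ℝ)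
    (hgen : IsGenericFn φ) (hsym : IsSymmetricFn φ) :
    ∀ x y : E, OrchardSym φ x y ↔ muCount φ x % 2 = muCount φ y % 2 := by
  intro x y
  rcases eq_or_ne x y with rfl | hxy
  · simp [OrchardSym]
  rw [OrchardSym, or_iff_right hxy, sepCount_eq_ncard hgen hsym,
    muCount_eq_ncard_positiveOn hsym, muCount_eq_ncard_positiveOn hsym]
  exact (ncard_link_mod_two_eq_iff d _ hxy).symm

theorem stmt_8 {E : Type*} [Fintype E] [DecidableEq E] (d : ℕ) (hd : 1 ≤ d)
    (hcard : d + 1 ≤ Fintype.card E)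
    (φ : (Fin (d + 1) → E) → ℝ)
    (hgen : IsGenericFn φ) (hsym : IsSymmetricFn φ) :
    ∀ x y : E, OrchardSym φ x y ↔ muCount φ x % 2 = muCount φ y % 2 :=
  stmt_8_general d φ hgen hsym
end

section
/- Let E be a finite set with |E| ≥ d+1 and let φ be a generic antisymmetric function on the injective (d+1)-tuples of E. Then Rφ is generic; moreover Rφ is symmetric if |E| ≡ d (mod 2), and Rφ is antisymmetric if |E| ≢ d (mod 2). -/
open Finset

lemma anti_zero_of_not_injective {E : Type*} {n : ℕ} {φ : (Fin n → E) → ℝ}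
    (hanti : IsAntisymmetricFn φ) {z : Fin n → E} (hz : ¬ Function.Injective z) :
    φ z = 0 := by
  rw [Function.not_injective_iff] at hz
  obtain ⟨i, j, hij, hne⟩ := hz
  have h := hanti z (Equiv.swap i j)
  have hzz : z ∘ (Equiv.swap i j) = z := by
    funext k
    rcases eq_or_ne k i with rfl | hki
    · simp [Equiv.swap_apply_left, hij]
    · rcases eq_or_ne k j with rfl | hkj
      · simp [Equiv.swap_apply_right, hij]
      · simp [Equiv.swap_apply_of_ne_of_ne hki hkj]
  rw [hzz, Equiv.Perm.sign_swap hne] at h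
  push_cast at h
  linarith

lemma rmap_comp_perm {E : Type*} [Fintype E] [DecidableEq E] {d : ℕ}
    {φ : (Fin (d + 1) → E) → ℝ} (hanti : IsAntisymmetricFn φ)
    (x : Fin d → E) (σ : Equiv.Perm (Fin d)) :
    Rmap φ (x ∘ σ) =
      ((Equiv.Perm.sign σ : ℤ) : ℝ) ^ (Finset.univ \ Finset.image x Finset.univ).card
        * Rmap φ x := by
  have himg : Finset.image (x ∘ σ) Finset.univ = Finset.image x Finset.univ := by
    rw [← Finset.image_image]
    congr 1
    simp
  set τ := Equiv.Perm.decomposeFin.symm (0, σ) with hτ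
  have hcons : ∀ y : E, Fin.cons y (x ∘ σ) = (Fin.cons y x) ∘ τ := by
    intro y; funext i
    refine Fin.cases ?_ ?_ i
    · simp [hτ]
    · intro k
      simp [hτ, Equiv.Perm.decomposeFin_symm_apply_succ]
  have hsign : ((Equiv.Perm.sign τ : ℤ) : ℝ) = ((Equiv.Perm.sign σ : ℤ) : ℝ) := by
    rw [hτ, Equiv.Perm.decomposeFin.symm_sign]
    simp
  unfold Rmap
  rw [himg]
  calc ∏ y ∈ Finset.univ \ Finset.image x Finset.univ, φ (Fin.cons y (x ∘ σ))
      = ∏ y ∈ Finset.univ \ Finset.image x Finset.univ,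
          (((Equiv.Perm.sign σ : ℤ) : ℝ) * φ (Fin.cons y x)) :=
        Finset.prod_congr rfl (fun y _ => by rw [hcons y, hanti, hsign])
    _ = _ := by rw [Finset.prod_mul_distrib, Finset.prod_const]

lemma rmap_zero_of_not_injective {E : Type*} [Fintype E] [DecidableEq E] {d : ℕ}
    (hcard : d + 1 ≤ Fintype.card E)
    {φ : (Fin (d + 1) → E) → ℝ} (hanti : IsAntisymmetricFn φ)
    {x : Fin d → E} (hx : ¬ Function.Injective x) :
    Rmap φ x = 0 := by
  have hne : (Finset.univ \ Finset.image x Finset.univ).Nonempty := by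
    rw [← Finset.card_pos, Finset.card_sdiff_of_subset (Finset.subset_univ _)]
    have := Finset.card_image_le (s := (Finset.univ : Finset (Fin d))) (f := x)
    simp only [Finset.card_univ, Fintype.card_fin] at this ⊢
    omega
  obtain ⟨y, hy⟩ := hne
  refine Finset.prod_eq_zero hy (anti_zero_of_not_injective hanti ?_)
  intro h
  exact hx (Fin.cons_injective_iff.mp h).2

theorem stmt_10 {E : Type*} [Fintype E] [DecidableEq E] (d : ℕ)
    (hcard : d + 1 ≤ Fintype.card E)
    (φ : (Fin (d + 1) → E) → ℝ)
    (hgen : IsGenericFn φ) (hanti : IsAntisymmetricFn φ) :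
    IsGenericFn (Rmap φ) ∧
    (Fintype.card E % 2 = d % 2 → IsSymmetricFn (Rmap φ)) ∧
    (Fintype.card E % 2 ≠ d % 2 → IsAntisymmetricFn (Rmap φ)) := by
  have key : ∀ x : Fin d → E, Function.Injective x →
      (Finset.univ \ Finset.image x Finset.univ).card = Fintype.card E - d := by
    intro x hx
    rw [Finset.card_sdiff_of_subset (Finset.subset_univ _), Finset.card_image_of_injective _ hx]
    simp
  refine ⟨?_, ?_, ?_⟩
  · intro x hx
    unfold Rmap
    rw [Finset.prod_ne_zero_iff]
    intro y hy
    apply hgen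
    rw [Fin.cons_injective_iff]
    refine ⟨?_, hx⟩
    intro hyr
    rw [Finset.mem_sdiff] at hy
    obtain ⟨i, hi⟩ := hyr
    exact hy.2 (Finset.mem_image.mpr ⟨i, Finset.mem_univ i, hi⟩)
  · intro hpar x σ
    by_cases hx : Function.Injective x
    · rw [rmap_comp_perm hanti, key x hx]
      have hk : (Fintype.card E - d) % 2 = 0 := by omega
      rcases Int.units_eq_one_or (Equiv.Perm.sign σ) with h | h <;> rw [h]
      · simp
      · push_cast
        rw [Even.neg_one_pow (Nat.even_iff.mpr hk), one_mul]
    · have hx' : ¬ Function.Injective (x ∘ σ) := fun h => hx (by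
        have : x = (x ∘ σ) ∘ σ.symm := by funext i; simp
        rw [this]; exact h.comp σ.symm.injective)
      rw [rmap_zero_of_not_injective hcard hanti hx,
        rmap_zero_of_not_injective hcard hanti hx']
  · intro hpar x σ
    by_cases hx : Function.Injective x
    · rw [rmap_comp_perm hanti, key x hx]
      have hk : (Fintype.card E - d) % 2 = 1 := by omega
      rcases Int.units_eq_one_or (Equiv.Perm.sign σ) with h | h <;> rw [h]
      · simp
      · push_cast
        rw [Odd.neg_one_pow (Nat.odd_iff.mpr hk)]
    · have hx' : ¬ Function.Injective (x ∘ σ) := fun h => hx (by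
        have : x = (x ∘ σ) ∘ σ.symm := by funext i; simp
        rw [this]; exact h.comp σ.symm.injective)
      rw [rmap_zero_of_not_injective hcard hanti hx,
        rmap_zero_of_not_injective hcard hanti hx']
      simp
end

section
/- Let E be a finite set with |E| ≥ d+1 and let φ, ψ both be generic symmetric, or both be generic antisymmetric, functions on the injective (d+1)-tuples of E that are flip-related with flip set F = {x₀,…,x_d}. Then for every injective d-tuple (y₁,…,y_d): Rφ(y₁,…,y_d)·Rψ(y₁,…,y_d) < 0 if {y₁,…,y_d} ⊆ F, and Rφ(y₁,…,y_d)·Rψ(y₁,…,y_d) > 0 otherwise. -/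
open Finset

lemma cons_inj_aux {E : Type*} [DecidableEq E] {d : ℕ} {y : Fin d → E} {x : E}
    (hy : Function.Injective y) (hx : x ∉ Finset.image y Finset.univ) :
    Function.Injective (Fin.cons x y : Fin (d + 1) → E) := by
  rw [Fin.cons_injective_iff]
  refine ⟨?_, hy⟩
  rintro ⟨i, hi⟩
  exact hx (Finset.mem_image.2 ⟨i, Finset.mem_univ _, hi⟩)

lemma cons_image_aux {E : Type*} [DecidableEq E] {d : ℕ} (y : Fin d → E) (x : E) :
    Finset.image (Fin.cons x y : Fin (d + 1) → E) Finset.univ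
      = insert x (Finset.image y Finset.univ) := by
  ext a
  simp only [Finset.mem_image, Finset.mem_insert, Finset.mem_univ, true_and]
  constructor
  · rintro ⟨i, hi⟩
    refine Fin.cases (fun hi => Or.inl (by simpa using hi.symm))
      (fun i' hi => Or.inr ⟨i', by simpa using hi⟩) i hi
  · rintro (rfl | ⟨i, hi⟩)
    · exact ⟨0, rfl⟩
    · exact ⟨i.succ, by simpa using hi⟩

theorem stmt_13 {E : Type*} [Fintype E] [DecidableEq E] (d : ℕ)
    (hcard : d + 1 ≤ Fintype.card E)
    (φ ψ : (Fin (d + 1) → E) → ℝ)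
    (hgenφ : IsGenericFn φ) (hgenψ : IsGenericFn ψ)
    (hsa : (IsSymmetricFn φ ∧ IsSymmetricFn ψ) ∨
           (IsAntisymmetricFn φ ∧ IsAntisymmetricFn ψ))
    (F : Finset E) (hF : F.card = d + 1)
    (hflip : FlipRelated φ ψ F) :
    ∀ y : Fin d → E, Function.Injective y →
      (Finset.image y Finset.univ ⊆ F → Rmap φ y * Rmap ψ y < 0) ∧
      (¬ Finset.image y Finset.univ ⊆ F → 0 < Rmap φ y * Rmap ψ y) := by
  intro y hy
  have hyd : (Finset.image y Finset.univ).card = d := by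
    rw [Finset.card_image_of_injective _ hy, Finset.card_univ, Fintype.card_fin]
  set s : Finset E := Finset.univ \ Finset.image y Finset.univ with hs
  have hprod : Rmap φ y * Rmap ψ y
      = ∏ x ∈ s, (φ (Fin.cons x y) * ψ (Fin.cons x y)) := by
    simp only [Rmap, Finset.prod_mul_distrib, hs]
  constructor
  · intro hsub
    have h1 : (F \ Finset.image y Finset.univ).card = 1 := by
      rw [Finset.card_sdiff_of_subset hsub, hyd, hF]
      omega
    obtain ⟨x0, hx0⟩ := Finset.card_eq_one.mp h1
    have hx0F : x0 ∈ F ∧ x0 ∉ Finset.image y Finset.univ := by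
      have := hx0 ▸ Finset.mem_singleton_self x0
      exact Finset.mem_sdiff.mp this
    have hx0s : x0 ∈ s := Finset.mem_sdiff.mpr ⟨Finset.mem_univ _, hx0F.2⟩
    have hinsF : insert x0 (Finset.image y Finset.univ) = F := by
      apply Finset.eq_of_subset_of_card_le
      · intro a ha
        rcases Finset.mem_insert.mp ha with rfl | ha
        · exact hx0F.1
        · exact hsub ha
      · rw [hF, Finset.card_insert_of_notMem hx0F.2, hyd]
    have hneg : φ (Fin.cons x0 y) * ψ (Fin.cons x0 y) < 0 := by
      have := (hflip _ (cons_inj_aux hy hx0F.2)).1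
      rw [cons_image_aux] at this
      exact this hinsF
    have hpos : ∀ x ∈ s.erase x0, 0 < φ (Fin.cons x y) * ψ (Fin.cons x y) := by
      intro x hx
      obtain ⟨hxne, hxs⟩ := Finset.mem_erase.mp hx
      have hxy : x ∉ Finset.image y Finset.univ := (Finset.mem_sdiff.mp hxs).2
      have := (hflip _ (cons_inj_aux hy hxy)).2
      rw [cons_image_aux] at this
      apply this
      intro hins
      exact hxne (by
        have : x ∈ F \ Finset.image y Finset.univ :=
          Finset.mem_sdiff.mpr ⟨hins ▸ Finset.mem_insert_self x _, hxy⟩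
        rw [hx0] at this
        exact Finset.mem_singleton.mp this)
    rw [hprod, ← Finset.mul_prod_erase s _ hx0s]
    exact mul_neg_of_neg_of_pos hneg (Finset.prod_pos hpos)
  · intro hnsub
    rw [hprod]
    apply Finset.prod_pos
    intro x hx
    have hxy : x ∉ Finset.image y Finset.univ := (Finset.mem_sdiff.mp hx).2
    have := (hflip _ (cons_inj_aux hy hxy)).2
    rw [cons_image_aux] at this
    apply this
    intro hins
    exact hnsub (fun a ha => hins ▸ Finset.mem_insert_of_mem ha)
end

section
/- Let E be a finite set, d ≥ 1 with |E| ≥ d+1, and let φ be a generic symmetric or a generic antisymmetric function on the injective (d+1)-tuples of E. Then for every injective (d−1)-tuple (x₁,…,x_{d−1}) one has R(Rφ)(x₁,…,x_{d−1}) = ε^{C(|E|−d+1, 2)} · t for some real t > 0, where ε = 1 if φ is symmetric and ε = −1 if φ is antisymmetric. In particular R(Rφ) is everywhere positive on injective (d−1)-tuples when φ is symmetric, or when φ is antisymmetric and C(|E|−d+1, 2) is even, and everywhere negative when φ is antisymmetric and C(|E|−d+1, 2) is odd. -/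
open Finset

section Aux

private lemma image_cons {E : Type*} [DecidableEq E] {d : ℕ} (y : E) (x : Fin d → E) :
    Finset.image (Fin.cons y x) Finset.univ = insert y (Finset.image x Finset.univ) := by
  ext a
  simp only [Finset.mem_image, Finset.mem_univ, true_and, Finset.mem_insert]
  constructor
  · rintro ⟨i, rfl⟩
    refine Fin.cases ?_ ?_ i
    · simp
    · intro j; right; exact ⟨j, rfl⟩
  · rintro (rfl | ⟨j, rfl⟩)
    · exact ⟨0, rfl⟩
    · exact ⟨j.succ, by simp⟩

private lemma cons_cons_swap {E : Type*} {d : ℕ} (x : Fin d → E) (y z : E) :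
    (Fin.cons z (Fin.cons y x)) ∘ (Equiv.swap (0 : Fin (d + 2)) 1) =
      Fin.cons y (Fin.cons z x) := by
  have h01 : (1 : Fin (d + 2)) = Fin.succ 0 := (Fin.succ_zero_eq_one).symm
  funext i
  refine Fin.cases ?_ (fun j => Fin.cases ?_ (fun k => ?_) j) i
  · simp only [Function.comp_apply, Equiv.swap_apply_left, Fin.cons_zero, h01,
      Fin.cons_succ]
  · simp only [Function.comp_apply, h01, Fin.cons_succ, Fin.cons_zero]
    rw [← h01, Equiv.swap_apply_right, Fin.cons_zero]
  · have h1 : (k.succ.succ : Fin (d + 2)) ≠ 0 := Fin.succ_ne_zero _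
    have h2 : (k.succ.succ : Fin (d + 2)) ≠ 1 := by
      rw [h01]
      exact fun h => (Fin.succ_ne_zero k) (Fin.succ_injective _ h)
    simp only [Function.comp_apply, Equiv.swap_apply_of_ne_of_ne h1 h2, Fin.cons_succ]

private lemma prod_pairs {E : Type*} [DecidableEq E] (ε : ℝ) (f : E → E → ℝ)
    (S : Finset E)
    (hsym : ∀ y ∈ S, ∀ z ∈ S, y ≠ z → f y z = ε * f z y)
    (hne : ∀ y ∈ S, ∀ z ∈ S, y ≠ z → f y z ≠ 0) :
    ∃ t : ℝ, 0 < t ∧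
      ∏ y ∈ S, ∏ z ∈ S.erase y, f y z = ε ^ (S.card.choose 2) * t := by
  induction S using Finset.induction_on with
  | empty => exact ⟨1, one_pos, by simp⟩
  | @insert a S ha ih =>
    obtain ⟨t, ht, hprod⟩ := ih
      (fun y hy z hz h => hsym y (mem_insert_of_mem hy) z (mem_insert_of_mem hz) h)
      (fun y hy z hz h => hne y (mem_insert_of_mem hy) z (mem_insert_of_mem hz) h)
    have hkey : ∏ y ∈ insert a S, ∏ z ∈ (insert a S).erase y, f y z =
        ((∏ z ∈ S, f a z) * ∏ y ∈ S, f y a) * ∏ y ∈ S, ∏ z ∈ S.erase y, f y z := by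
      rw [Finset.prod_insert ha, Finset.erase_insert ha]
      have : ∀ y ∈ S, ∏ z ∈ (insert a S).erase y, f y z = f y a * ∏ z ∈ S.erase y, f y z := by
        intro y hy
        have hay : a ≠ y := fun h => ha (h ▸ hy)
        rw [Finset.erase_insert_of_ne hay,
          Finset.prod_insert (fun h => ha (Finset.mem_of_mem_erase h))]
      rw [Finset.prod_congr rfl this, Finset.prod_mul_distrib]
      ring
    have hfa : ∀ z ∈ S, f a z = ε * f z a := fun z hz =>
      hsym a (mem_insert_self a S) z (mem_insert_of_mem hz) (fun h => ha (h ▸ hz))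
    have h2 : (∏ z ∈ S, f a z) * ∏ y ∈ S, f y a = ε ^ S.card * ∏ z ∈ S, (f z a) ^ 2 := by
      rw [Finset.prod_congr rfl hfa, Finset.prod_mul_distrib, Finset.prod_const,
        mul_assoc, ← Finset.prod_mul_distrib]
      congr 1
      exact Finset.prod_congr rfl fun z _ => (pow_two _).symm
    have hu : 0 < ∏ z ∈ S, (f z a) ^ 2 := by
      apply Finset.prod_pos
      intro z hz
      have := hne z (mem_insert_of_mem hz) a (mem_insert_self a S) (fun h => ha (h ▸ hz))
      positivity
    refine ⟨(∏ z ∈ S, (f z a) ^ 2) * t, mul_pos hu ht, ?_⟩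
    rw [hkey, h2, hprod, Finset.card_insert_of_notMem ha]
    have : (S.card + 1).choose 2 = S.card + S.card.choose 2 := by
      rw [Nat.choose_succ_succ]
      simp [Nat.choose_one_right]
    rw [this, pow_add]
    ring

private lemma core {E : Type*} [Fintype E] [DecidableEq E] {d : ℕ}
    (hcard : d + 2 ≤ Fintype.card E)
    (φ : (Fin (d + 2) → E) → ℝ) (hgen : IsGenericFn φ) (ε : ℝ)
    (hswap : ∀ (y z : E) (x : Fin d → E),
      φ (Fin.cons z (Fin.cons y x)) = ε * φ (Fin.cons y (Fin.cons z x)))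
    (x : Fin d → E) (hx : Function.Injective x) :
    ∃ t : ℝ, 0 < t ∧
      Rmap (Rmap φ) x = ε ^ ((Fintype.card E - (d + 1) + 1).choose 2) * t := by
  set S : Finset E := Finset.univ \ Finset.image x Finset.univ with hS
  have hScard : S.card = Fintype.card E - d := by
    rw [hS, Finset.card_sdiff_of_subset (Finset.subset_univ _), Finset.card_univ,
      Finset.card_image_of_injective _ hx, Finset.card_univ, Fintype.card_fin]
  have hexp : Fintype.card E - (d + 1) + 1 = Fintype.card E - d := by omega
  have hR : Rmap (Rmap φ) x =
      ∏ y ∈ S, ∏ z ∈ S.erase y, φ (Fin.cons z (Fin.cons y x)) := by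
    unfold Rmap
    refine Finset.prod_congr rfl fun y hy => Finset.prod_congr ?_ fun _ _ => rfl
    rw [image_cons]
    ext a
    simp only [Finset.mem_sdiff, Finset.mem_univ, true_and, Finset.mem_insert,
      Finset.mem_erase, hS]
    tauto
  have hmem : ∀ y ∈ S, y ∉ Set.range x := by
    intro y hy hr
    rw [hS, Finset.mem_sdiff] at hy
    obtain ⟨i, rfl⟩ := hr
    exact hy.2 (Finset.mem_image_of_mem x (Finset.mem_univ i))
  obtain ⟨t, ht, hprod⟩ := prod_pairs ε (fun y z => φ (Fin.cons z (Fin.cons y x))) S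
    (fun y _ z _ _ => hswap y z x)
    (by
      intro y hy z hz hyz
      apply hgen
      rw [Fin.cons_injective_iff]
      refine ⟨?_, ?_⟩
      · rw [Fin.range_cons]
        rintro (h | h)
        · exact hyz h.symm
        · exact hmem z hz h
      · rw [Fin.cons_injective_iff]
        exact ⟨hmem y hy, hx⟩)
  exact ⟨t, ht, by rw [hR, hprod, hScard, hexp]⟩

end Aux


/-- Paper's `d` is `d + 1` here (so that `Rmap (Rmap φ)` is defined on `d`-tuples
without natural subtraction); `d + 1 ≥ 1` holds automatically, and the exponent
`C(|E| - d + 1, 2)` of the paper is `C(|E| - (d+1) + 1, 2)` here. -/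

theorem stmt_14 {E : Type*} [Fintype E] [DecidableEq E] (d : ℕ)
    (hcard : d + 2 ≤ Fintype.card E)
    (φ : (Fin (d + 2) → E) → ℝ) (hgen : IsGenericFn φ) :
    (IsSymmetricFn φ → ∀ x : Fin d → E, Function.Injective x →
      (∃ t : ℝ, 0 < t ∧
        Rmap (Rmap φ) x =
          (1 : ℝ) ^ Nat.choose (Fintype.card E - (d + 1) + 1) 2 * t) ∧
      0 < Rmap (Rmap φ) x) ∧
    (IsAntisymmetricFn φ → ∀ x : Fin d → E, Function.Injective x →
      (∃ t : ℝ, 0 < t ∧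
        Rmap (Rmap φ) x =
          (-1 : ℝ) ^ Nat.choose (Fintype.card E - (d + 1) + 1) 2 * t) ∧
      (Even (Nat.choose (Fintype.card E - (d + 1) + 1) 2) → 0 < Rmap (Rmap φ) x) ∧
      (Odd (Nat.choose (Fintype.card E - (d + 1) + 1) 2) → Rmap (Rmap φ) x < 0)) := by
  have hswapfun : ∀ (y z : E) (x : Fin d → E),
      (Fin.cons z (Fin.cons y x)) ∘ (Equiv.swap (0 : Fin (d + 2)) 1) =
        Fin.cons y (Fin.cons z x) := fun y z x => cons_cons_swap x y z
  have h01 : (0 : Fin (d + 2)) ≠ 1 := Fin.zero_ne_one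
  constructor
  · intro hsym x hx
    obtain ⟨t, ht, heq⟩ := core hcard φ hgen 1
      (fun y z x => by
        have h := hsym (Fin.cons z (Fin.cons y x)) (Equiv.swap 0 1)
        rw [hswapfun] at h
        rw [← h]; ring) x hx
    rw [one_pow, one_mul] at heq
    exact ⟨⟨t, ht, by rw [one_pow, one_mul]; exact heq⟩, heq ▸ ht⟩
  · intro hanti x hx
    obtain ⟨t, ht, heq⟩ := core hcard φ hgen (-1)
      (fun y z x => by
        have h := hanti (Fin.cons z (Fin.cons y x)) (Equiv.swap 0 1)
        rw [hswapfun, Equiv.Perm.sign_swap h01] at h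
        push_cast at h
        linarith) x hx
    refine ⟨⟨t, ht, heq⟩, fun he => ?_, fun ho => ?_⟩
    · rw [heq, he.neg_one_pow, one_mul]; exact ht
    · rw [heq, ho.neg_one_pow]; linarith
end

section
/- Let E be a finite set with |E| ≥ d+2 and let φ, ψ both be generic symmetric, or both be generic antisymmetric, functions on the injective (d+1)-tuples of E that are flip-related with flip set F = {x₀,…,x_d}. Then for every injective (d+2)-tuple (y₀,…,y_{d+1}): Aφ(y₀,…,y_{d+1})·Aψ(y₀,…,y_{d+1}) < 0 if F ⊆ {y₀,…,y_{d+1}}, and Aφ(y₀,…,y_{d+1})·Aψ(y₀,…,y_{d+1}) > 0 otherwise. -/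
open Finset

lemma img_comp_erase {E : Type*} [DecidableEq E] {d : ℕ} (y : Fin (d + 2) → E)
    (hy : Function.Injective y) (i : Fin (d + 2)) :
    Finset.image (y ∘ Fin.succAbove i) Finset.univ
      = (Finset.image y Finset.univ).erase (y i) := by
  ext a
  simp only [Finset.mem_image, Finset.mem_erase, Finset.mem_univ, true_and,
    Function.comp_apply]
  constructor
  · rintro ⟨j, rfl⟩
    exact ⟨fun h => (Fin.succAbove_ne i j) (hy h), ⟨_, rfl⟩⟩
  · rintro ⟨hne, k, rfl⟩
    obtain ⟨j, rfl⟩ := Fin.exists_succAbove_eq (fun h : k = i => hne (by rw [h]))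
    exact ⟨j, rfl⟩

theorem stmt_18 {E : Type*} [Fintype E] [DecidableEq E] (d : ℕ)
    (hcard : d + 2 ≤ Fintype.card E)
    (φ ψ : (Fin (d + 1) → E) → ℝ)
    (hgenφ : IsGenericFn φ) (hgenψ : IsGenericFn ψ)
    (hsa : (IsSymmetricFn φ ∧ IsSymmetricFn ψ) ∨
           (IsAntisymmetricFn φ ∧ IsAntisymmetricFn ψ))
    (F : Finset E) (hF : F.card = d + 1)
    (hflip : FlipRelated φ ψ F) :
    ∀ y : Fin (d + 2) → E, Function.Injective y →
      (F ⊆ Finset.image y Finset.univ → Amap φ y * Amap ψ y < 0) ∧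
      (¬ F ⊆ Finset.image y Finset.univ → 0 < Amap φ y * Amap ψ y) := by
  intro y hy
  have hyinj : ∀ i : Fin (d + 2), Function.Injective (y ∘ Fin.succAbove i) :=
    fun i => hy.comp (Fin.succAbove_right_injective)
  have hprod : Amap φ y * Amap ψ y
      = ∏ i : Fin (d + 2), (φ (y ∘ Fin.succAbove i) * ψ (y ∘ Fin.succAbove i)) := by
    simp [Amap, Finset.prod_mul_distrib]
  have hcardim : (Finset.image y Finset.univ).card = d + 2 := by
    rw [Finset.card_image_of_injective _ hy, Finset.card_univ, Fintype.card_fin]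
  constructor
  · intro hFsub
    have hsd : (Finset.image y Finset.univ \ F).card = 1 := by
      rw [Finset.card_sdiff_of_subset hFsub, hcardim, hF]
      omega
    obtain ⟨e, he⟩ := Finset.card_eq_one.mp hsd
    have heim : e ∈ Finset.image y Finset.univ := by
      have : e ∈ Finset.image y Finset.univ \ F := by rw [he]; exact Finset.mem_singleton_self e
      exact (Finset.mem_sdiff.mp this).1
    have heF : e ∉ F := by
      have : e ∈ Finset.image y Finset.univ \ F := by rw [he]; exact Finset.mem_singleton_self e
      exact (Finset.mem_sdiff.mp this).2
    obtain ⟨i₀, -, hi₀⟩ := Finset.mem_image.mp heim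
    have himg : ∀ i : Fin (d + 2),
        Finset.image (y ∘ Fin.succAbove i) Finset.univ = F ↔ i = i₀ := by
      intro i
      rw [img_comp_erase y hy i]
      constructor
      · intro h
        by_contra hne
        have hyi : y i ∈ F := by
          by_contra hyiF
          have : y i ∈ Finset.image y Finset.univ \ F :=
            Finset.mem_sdiff.mpr ⟨Finset.mem_image_of_mem y (Finset.mem_univ i), hyiF⟩
          rw [he, Finset.mem_singleton] at this
          exact hne (hy (this.trans hi₀.symm))
        rw [← h] at hyi
        exact (Finset.notMem_erase _ _) hyi
      · rintro rfl
        have hsub : F ⊆ (Finset.image y Finset.univ).erase (y i) := by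
          intro a ha
          refine Finset.mem_erase.mpr ⟨fun hae => heF (hi₀ ▸ hae ▸ ha), hFsub ha⟩
        have hcr : ((Finset.image y Finset.univ).erase (y i)).card = d + 1 := by
          rw [Finset.card_erase_of_mem (Finset.mem_image_of_mem y (Finset.mem_univ i)), hcardim]
          omega
        exact (Finset.eq_of_subset_of_card_le hsub (by rw [hcr, hF])).symm
    rw [hprod, ← Finset.mul_prod_erase Finset.univ _ (Finset.mem_univ i₀)]
    apply mul_neg_of_neg_of_pos
    · exact (hflip _ (hyinj i₀)).1 ((himg i₀).mpr rfl)
    · apply Finset.prod_pos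
      intro i hi
      have hne : i ≠ i₀ := (Finset.mem_erase.mp hi).1
      exact (hflip _ (hyinj i)).2 (fun h => hne ((himg i).mp h))
  · intro hFsub
    rw [hprod]
    apply Finset.prod_pos
    intro i _
    apply (hflip _ (hyinj i)).2
    intro h
    apply hFsub
    rw [← h, img_comp_erase y hy i]
    exact Finset.erase_subset _ _
end

section
/- Let E be a finite set with |E| ≥ d+3 and let φ be a generic symmetric or a generic antisymmetric function on the injective (d+1)-tuples of E. Then the function A(Aφ) is strictly positive on every injective (d+3)-tuple of elements of E. -/
open Finset

lemma val_succAbove' {n : ℕ} (i : Fin (n+1)) (j : Fin n) :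
    (i.succAbove j : ℕ) = if (j:ℕ) < i then (j:ℕ) else (j:ℕ)+1 := by
  rcases Nat.lt_or_ge (j:ℕ) (i:ℕ) with h | h
  · rw [Fin.succAbove_of_castSucc_lt _ _ (by simpa [Fin.lt_def] using h)]
    simp [h]
  · rw [Fin.succAbove_of_le_castSucc _ _ (by simpa [Fin.le_def] using h)]
    simp [Nat.not_lt.2 h]

lemma val_predAbove' {n : ℕ} (p : Fin n) (i : Fin (n+1)) :
    (p.predAbove i : ℕ) = if (p:ℕ) < i then (i:ℕ)-1 else (i:ℕ) := by
  rcases Nat.lt_or_ge (p:ℕ) (i:ℕ) with h | h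
  · rw [Fin.predAbove_of_castSucc_lt _ _ (by simpa [Fin.lt_def] using h), Fin.coe_pred]
    simp [h]
  · rw [Fin.predAbove_of_le_castSucc _ _ (by simpa [Fin.le_def] using h), Fin.coe_castPred]
    simp [Nat.not_lt.2 h]

lemma fin_inv1 {n : ℕ} (i : Fin (n+2)) (j : Fin (n+1)) :
    (i.succAbove j).succAbove (j.predAbove i) = i := by
  have hi := i.is_lt; have hj := j.is_lt
  rw [Fin.ext_iff]
  simp only [val_succAbove', val_predAbove']
  split_ifs <;> omega

lemma fin_inv2 {n : ℕ} (i : Fin (n+2)) (j : Fin (n+1)) :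
    (j.predAbove i).predAbove (i.succAbove j) = j := by
  have hi := i.is_lt; have hj := j.is_lt
  rw [Fin.ext_iff]
  simp only [val_succAbove', val_predAbove']
  split_ifs <;> omega

lemma fin_comp {n : ℕ} (i : Fin (n+2)) (j : Fin (n+1)) (k : Fin n) :
    (i.succAbove j).succAbove ((j.predAbove i).succAbove k) = i.succAbove (j.succAbove k) := by
  have hi := i.is_lt; have hj := j.is_lt; have hk := k.is_lt
  rw [Fin.ext_iff]
  simp only [val_succAbove', val_predAbove']
  split_ifs <;> omega

lemma fin_ne {n : ℕ} (i : Fin (n+2)) (j : Fin (n+1)) : i.succAbove j ≠ i :=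
  Fin.succAbove_ne i j

lemma prod_pos_of_involution {α : Type*} [Fintype α] (P : α → ℝ) (ι : α → α)
    (h0 : ∀ a, P a ≠ 0) (hι : ∀ a, P (ι a) = P a) (hne : ∀ a, ι a ≠ a)
    (hinv : ∀ a, ι (ι a) = a) : 0 < ∏ a, P a := by
  have hsgn : (∏ a, (if 0 < P a then (1:ℝ) else -1)) = 1 := by
    refine Finset.prod_ninvolution ι (fun a => ?_) (fun a _ => hne a)
      (fun a => Finset.mem_univ _) hinv
    rw [hι]; split_ifs <;> norm_num
  have hPa : ∀ a, P a = (if 0 < P a then (1:ℝ) else -1) * |P a| := by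
    intro a
    rcases lt_trichotomy (P a) 0 with h | h | h
    · simp [not_lt.2 h.le, abs_of_neg h]
    · exact absurd h (h0 a)
    · simp [h, abs_of_pos h]
  calc (0:ℝ) < ∏ a, |P a| := Finset.prod_pos (fun a _ => abs_pos.2 (h0 a))
    _ = ∏ a, P a := by
        rw [← one_mul (∏ a, |P a|), ← hsgn, ← Finset.prod_mul_distrib]
        exact Finset.prod_congr rfl (fun a _ => (hPa a).symm)

theorem stmt_19 {E : Type*} [Fintype E] [DecidableEq E] (d : ℕ)
    (hcard : d + 3 ≤ Fintype.card E)
    (φ : (Fin (d + 1) → E) → ℝ) (hgen : IsGenericFn φ)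
    (hsa : IsSymmetricFn φ ∨ IsAntisymmetricFn φ) :
    ∀ x : Fin (d + 3) → E, Function.Injective x → 0 < Amap (Amap φ) x := by
  intro x hx
  have hA : Amap (Amap φ) x
      = ∏ p : Fin (d + 3) × Fin (d + 2), φ (x ∘ (p.1.succAbove ∘ p.2.succAbove)) := by
    rw [Fintype.prod_prod_type]
    rfl
  rw [hA]
  refine prod_pos_of_involution _
    (fun p => (p.1.succAbove p.2, p.2.predAbove p.1)) ?_ ?_ ?_ ?_
  · intro p
    exact hgen _ (hx.comp ((Fin.succAbove_right_injective).comp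
      (Fin.succAbove_right_injective)))
  · intro p
    congr 1
    funext k
    exact congrArg x (fin_comp p.1 p.2 k)
  · intro p hp
    exact Fin.succAbove_ne p.1 p.2 (congrArg Prod.fst hp)
  · intro p
    exact Prod.ext (fin_inv1 p.1 p.2) (fin_inv2 p.1 p.2)
end
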